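/- For positive integers i ≤ j ≤ k ≤ l, let H^{(4)}_{i,j,k,l} (a 4-dagger) be the 4-uniform hypergraph obtained by attaching loose paths of lengths i, j, k and l to the four vertices of a single edge (one path at each vertex, the paths otherwise pairwise disjoint and disjoint from the central edge). Then each of the hypergraphs H^{(4)}_{1,2,2,2}, H^{(4)}_{1,2,2,3}, H^{(4)}_{1,1,4,4}, H^{(4)}_{1,1,4,5}, and H^{(4)}_{1,1,k,l} for every 1 ≤ k ≤ 3 and l ≥ k, has spectral radius at most 6·(2+√5)^{1/4}. -/

import Mathlib

open Finset

/-- A hypergraph on vertex type `V`, given by its finite set of edges. -/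
structure FinsetHypergraph (V : Type) [DecidableEq V] where
  edges : Finset (Finset V)

namespace FinsetHypergraph

variable {V : Type} [DecidableEq V]

/-- The vertex set of `H`: all vertices lying in some edge. -/
def vertexSet (H : FinsetHypergraph V) : Finset V := H.edges.biUnion id

/-- `H` is `r`-uniform: every edge has exactly `r` vertices. -/
def IsUniform (H : FinsetHypergraph V) (r : ℕ) : Prop := ∀ e ∈ H.edges, e.card = r

/-- The degree of a vertex: the number of edges containing it. -/
def degree (H : FinsetHypergraph V) (v : V) : ℕ := (H.edges.filter fun e => v ∈ e).card

/-- The spectral radius of an `r`-uniform hypergraph `H`: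
`ρ(H) = r! · max{ (∑_{e ∈ E} ∏_{v ∈ e} x_v) / (∑_v x_v ^ r) : x ≥ 0, x ≠ 0 }`. -/
noncomputable def spectralRadius (H : FinsetHypergraph V) (r : ℕ) : ℝ :=
  (Nat.factorial r : ℝ) *
    sSup {t : ℝ | ∃ x : V → ℝ, (∀ v, 0 ≤ x v) ∧ (∃ v ∈ H.vertexSet, x v ≠ 0) ∧
      t = (∑ e ∈ H.edges, ∏ v ∈ e, x v) / (∑ v ∈ H.vertexSet, x v ^ r)}

/-- `v, e` form a walk `v 0, e 0, v 1, e 1, …, e (l-1), v l` in `H`. -/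
def IsWalkSeq (H : FinsetHypergraph V) {l : ℕ} (v : Fin (l + 1) → V) (e : Fin l → Finset V) : Prop :=
  ∀ i : Fin l, e i ∈ H.edges ∧ v i.castSucc ∈ e i ∧ v i.succ ∈ e i

/-- `H` is connected: every two vertices are joined by a walk. -/
def Connected (H : FinsetHypergraph V) : Prop :=
  ∀ u ∈ H.vertexSet, ∀ w ∈ H.vertexSet,
    ∃ (l : ℕ) (v : Fin (l + 1) → V) (e : Fin l → Finset V),
      H.IsWalkSeq v e ∧ v 0 = u ∧ v (Fin.last l) = w

/-- The cyclic successor on `Fin l`. -/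
def cyc {l : ℕ} (i : Fin l) : Fin l := ⟨((i : ℕ) + 1) % l, Nat.mod_lt _ i.pos⟩

/-- `v, e` form a cycle `v 0, e 0, v 1, e 1, …, e (l-1), v 0` of length `l` in `H`,
with all vertices and all edges distinct. -/
def IsCycleSeq (H : FinsetHypergraph V) {l : ℕ} (v : Fin l → V) (e : Fin l → Finset V) : Prop :=
  Function.Injective v ∧ Function.Injective e ∧
    ∀ i : Fin l, e i ∈ H.edges ∧ v i ∈ e i ∧ v (cyc i) ∈ e i

/-- `H` contains a cycle. -/
def HasCycle (H : FinsetHypergraph V) : Prop :=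
  ∃ l : ℕ, 2 ≤ l ∧ ∃ (v : Fin l → V) (e : Fin l → Finset V), H.IsCycleSeq v e

/-- A hypertree: connected and acyclic. -/
def IsHypertree (H : FinsetHypergraph V) : Prop := H.Connected ∧ ¬H.HasCycle

/-- `H` is irreducible: some edge has all of its vertices of degree at least `2`. -/
def Irreducible (H : FinsetHypergraph V) : Prop := ∃ e ∈ H.edges, ∀ v ∈ e, 2 ≤ H.degree v

/-- `g` encodes a loose path: consecutive edges meet in exactly one vertex and
non-consecutive edges are disjoint. -/
def IsLoosePathSeq {m : ℕ} (g : Fin m → Finset V) : Prop :=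
  (∀ i j : Fin m, (i : ℕ) + 1 = (j : ℕ) → (g i ∩ g j).card = 1) ∧
    ∀ i j : Fin m, (i : ℕ) + 1 < (j : ℕ) → g i ∩ g j = ∅

/-- The set of vertices covered by a family of edges. -/
def pathVerts {m : ℕ} (g : Fin m → Finset V) : Finset V := Finset.univ.biUnion g

/-- A loose path of edges of `H`, attached to the edge `e0` at the vertex `a`:
`a` is an end vertex of the first edge of the path, and the path meets `e0` only in `a`. -/
def IsAttachedPath (H : FinsetHypergraph V) (e0 : Finset V) (a : V) {m : ℕ}
    (g : Fin m → Finset V) : Prop :=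
  IsLoosePathSeq g ∧ (∀ j, g j ∈ H.edges) ∧ (∀ j, g j ≠ e0) ∧
    pathVerts g ∩ e0 = {a} ∧ ∀ j : Fin m, a ∈ g j ↔ (j : ℕ) = 0

/-- A path in `H`: a walk with all vertices and all edges distinct. -/
def IsPathSeq (H : FinsetHypergraph V) {l : ℕ} (v : Fin (l + 1) → V) (e : Fin l → Finset V) : Prop :=
  H.IsWalkSeq v e ∧ Function.Injective v ∧ Function.Injective e

/-- The 4-dagger `H^{(4)}_{i,j,k,l}` : a single (central) 4-edge with loose paths of
lengths `i`, `j`, `k`, `l` attached to its four vertices, the paths otherwise pairwise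
disjoint and disjoint from the central edge. -/
def IsDagger4 (H : FinsetHypergraph V) (i j k l : ℕ) : Prop :=
  H.IsUniform 4 ∧
    ∃ (a : Fin 4 → V) (g₁ : Fin i → Finset V) (g₂ : Fin j → Finset V)
      (g₃ : Fin k → Finset V) (g₄ : Fin l → Finset V),
      Function.Injective a ∧ Finset.univ.image a ∈ H.edges ∧
      H.IsAttachedPath (Finset.univ.image a) (a 0) g₁ ∧
      H.IsAttachedPath (Finset.univ.image a) (a 1) g₂ ∧
      H.IsAttachedPath (Finset.univ.image a) (a 2) g₃ ∧
      H.IsAttachedPath (Finset.univ.image a) (a 3) g₄ ∧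
      pathVerts g₁ ∩ pathVerts g₂ = ∅ ∧ pathVerts g₁ ∩ pathVerts g₃ = ∅ ∧
      pathVerts g₁ ∩ pathVerts g₄ = ∅ ∧ pathVerts g₂ ∩ pathVerts g₃ = ∅ ∧
      pathVerts g₂ ∩ pathVerts g₄ = ∅ ∧ pathVerts g₃ ∩ pathVerts g₄ = ∅ ∧
      ∀ f ∈ H.edges, f = Finset.univ.image a ∨ (∃ t, g₁ t = f) ∨ (∃ t, g₂ t = f) ∨
        (∃ t, g₃ t = f) ∨ ∃ t, g₄ t = f

end FinsetHypergraph

open FinsetHypergraph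


namespace DaggerProof

variable {V : Type} [DecidableEq V]

lemma amgm4 (a b c d : ℝ) (ha : 0 ≤ a) (hb : 0 ≤ b) (hc : 0 ≤ c) (hd : 0 ≤ d) :
    a*b*c*d ≤ (a^4+b^4+c^4+d^4)/4 := by
  nlinarith [sq_nonneg (a*b-c*d), sq_nonneg (a^2-b^2), sq_nonneg (c^2-d^2),
    mul_nonneg ha hb, mul_nonneg hc hd, sq_nonneg (a*b+c*d)]

lemma card_four (e : Finset V) (he : e.card = 4) :
    ∃ a b c d : V, a ≠ b ∧ a ≠ c ∧ a ≠ d ∧ b ≠ c ∧ b ≠ d ∧ c ≠ d ∧ e = {a, b, c, d} := by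
  obtain ⟨a, t, hat, rfl, ht⟩ := Finset.card_eq_succ.mp he
  obtain ⟨b, c, d, hbc, hbd, hcd, rfl⟩ := Finset.card_eq_three.mp ht
  refine ⟨a, b, c, d, ?_, ?_, ?_, hbc, hbd, hcd, rfl⟩ <;>
    · rintro rfl; simp at hat

lemma edge_amgm (e : Finset V) (he : e.card = 4) (x y : V → ℝ)
    (hx : ∀ v ∈ e, 0 ≤ x v) (hy : ∀ v ∈ e, 0 < y v) :
    ∏ v ∈ e, x v ≤ (1/4) * ∑ v ∈ e, (∏ u ∈ e, y u) * x v ^ 4 / y v ^ 4 := by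
  obtain ⟨a, b, c, d, hab, hac, had, hbc, hbd, hcd, rfl⟩ := card_four e he
  have ha : a ∈ ({a,b,c,d} : Finset V) := by simp
  have hb : b ∈ ({a,b,c,d} : Finset V) := by simp
  have hc' : c ∈ ({a,b,c,d} : Finset V) := by simp
  have hd' : d ∈ ({a,b,c,d} : Finset V) := by simp
  have hprod : ∀ f : V → ℝ, ∏ v ∈ ({a,b,c,d} : Finset V), f v = f a * f b * f c * f d := by
    intro f
    rw [Finset.prod_insert (by simp [hab, hac, had]),
      Finset.prod_insert (by simp [hbc, hbd]), Finset.prod_insert (by simp [hcd]),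
      Finset.prod_singleton]
    ring
  have hsum : ∀ f : V → ℝ, ∑ v ∈ ({a,b,c,d} : Finset V), f v = f a + f b + f c + f d := by
    intro f
    rw [Finset.sum_insert (by simp [hab, hac, had]),
      Finset.sum_insert (by simp [hbc, hbd]), Finset.sum_insert (by simp [hcd]),
      Finset.sum_singleton]
    ring
  rw [hprod, hsum, hprod]
  have h := amgm4 (x a / y a) (x b / y b) (x c / y c) (x d / y d)
    (div_nonneg (hx a ha) (hy a ha).le) (div_nonneg (hx b hb) (hy b hb).le)
    (div_nonneg (hx c hc') (hy c hc').le) (div_nonneg (hx d hd') (hy d hd').le)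
  have hya := hy a ha; have hyb := hy b hb; have hyc := hy c hc'; have hyd := hy d hd'
  have hP : (0:ℝ) < y a * y b * y c * y d := by positivity
  have h2 := mul_le_mul_of_nonneg_left h hP.le
  calc x a * x b * x c * x d
      = (y a * y b * y c * y d) * (x a / y a * (x b / y b) * (x c / y c) * (x d / y d)) := by
        field_simp
    _ ≤ (y a * y b * y c * y d) *
        (((x a / y a)^4 + (x b / y b)^4 + (x c / y c)^4 + (x d / y d)^4)/4) := h2
    _ = 1/4 * (y a * y b * y c * y d * x a ^ 4 / y a ^ 4 +
        y a * y b * y c * y d * x b ^ 4 / y b ^ 4 +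
        y a * y b * y c * y d * x c ^ 4 / y c ^ 4 +
        y a * y b * y c * y d * x d ^ 4 / y d ^ 4) := by
        field_simp

lemma swap_sum (E : Finset (Finset V)) (f : V → Finset V → ℝ) :
    ∑ e ∈ E, ∑ v ∈ e, f v e = ∑ v ∈ E.biUnion id, ∑ e ∈ E.filter (fun e => v ∈ e), f v e := by
  have h1 : ∀ e ∈ E, ∑ v ∈ e, f v e = ∑ v ∈ E.biUnion id, if v ∈ e then f v e else 0 := by
    intro e he
    rw [Finset.sum_ite_mem, Finset.inter_eq_right.mpr]
    intro v hv
    exact Finset.mem_biUnion.mpr ⟨e, he, hv⟩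
  rw [Finset.sum_congr rfl h1, Finset.sum_comm]
  refine Finset.sum_congr rfl fun v _ => ?_
  rw [Finset.sum_filter]

lemma spec_le (H : FinsetHypergraph V) (lam : ℝ) (hlam : 0 ≤ lam) (hu : H.IsUniform 4)
    (y : V → ℝ) (hy : ∀ v ∈ H.vertexSet, 0 < y v)
    (heig : ∀ v ∈ H.vertexSet,
      ∑ e ∈ H.edges.filter (fun e => v ∈ e), ∏ u ∈ e.erase v, y u ≤ lam * y v ^ 3) :
    H.spectralRadius 4 ≤ 6 * lam := by
  have hsub : ∀ e ∈ H.edges, ∀ v ∈ e, v ∈ H.vertexSet := by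
    intro e he v hv; exact Finset.mem_biUnion.mpr ⟨e, he, hv⟩
  have key : sSup {t : ℝ | ∃ x : V → ℝ, (∀ v, 0 ≤ x v) ∧ (∃ v ∈ H.vertexSet, x v ≠ 0) ∧
      t = (∑ e ∈ H.edges, ∏ v ∈ e, x v) / (∑ v ∈ H.vertexSet, x v ^ 4)} ≤ lam / 4 := by
    apply Real.sSup_le
    · rintro t ⟨x, hx, ⟨v0, hv0, hxv0⟩, rfl⟩
      have hD : 0 < ∑ v ∈ H.vertexSet, x v ^ 4 := by
        apply Finset.sum_pos' (fun v _ => by positivity)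
        exact ⟨v0, hv0, by positivity⟩
      rw [div_le_iff₀ hD]
      calc ∑ e ∈ H.edges, ∏ v ∈ e, x v
          ≤ ∑ e ∈ H.edges, (1/4) * ∑ v ∈ e, (∏ u ∈ e, y u) * x v ^ 4 / y v ^ 4 := by
            refine Finset.sum_le_sum fun e he => ?_
            exact edge_amgm e (hu e he) x y (fun v hv => hx v)
              (fun v hv => hy v (hsub e he v hv))
        _ = (1/4) * ∑ v ∈ H.vertexSet,
              ∑ e ∈ H.edges.filter (fun e => v ∈ e), (∏ u ∈ e, y u) * x v ^ 4 / y v ^ 4 := by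
            rw [← Finset.mul_sum]
            congr 1
            exact swap_sum H.edges (fun v e => (∏ u ∈ e, y u) * x v ^ 4 / y v ^ 4)
        _ ≤ (1/4) * ∑ v ∈ H.vertexSet, lam * x v ^ 4 := by
            refine mul_le_mul_of_nonneg_left (Finset.sum_le_sum fun v hv => ?_) (by norm_num)
            have hyv := hy v hv
            have : ∑ e ∈ H.edges.filter (fun e => v ∈ e), (∏ u ∈ e, y u) * x v ^ 4 / y v ^ 4
                = (∑ e ∈ H.edges.filter (fun e => v ∈ e), ∏ u ∈ e, y u) * (x v ^ 4 / y v ^ 4) := by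
              rw [Finset.sum_mul]
              refine Finset.sum_congr rfl fun e he => ?_
              ring
            rw [this]
            have h2 : ∑ e ∈ H.edges.filter (fun e => v ∈ e), ∏ u ∈ e, y u
                = y v * ∑ e ∈ H.edges.filter (fun e => v ∈ e), ∏ u ∈ e.erase v, y u := by
              rw [Finset.mul_sum]
              refine Finset.sum_congr rfl fun e he => ?_
              have hve : v ∈ e := (Finset.mem_filter.mp he).2
              exact (Finset.mul_prod_erase e y hve).symm
            rw [h2]
            have h3 : y v * ∑ e ∈ H.edges.filter (fun e => v ∈ e), ∏ u ∈ e.erase v, y u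
                ≤ y v * (lam * y v ^ 3) :=
              mul_le_mul_of_nonneg_left (heig v hv) hyv.le
            calc y v * (∑ e ∈ H.edges.filter (fun e => v ∈ e), ∏ u ∈ e.erase v, y u)
                  * (x v ^ 4 / y v ^ 4)
                ≤ y v * (lam * y v ^ 3) * (x v ^ 4 / y v ^ 4) := by
                  apply mul_le_mul_of_nonneg_right h3
                  positivity
              _ = lam * x v ^ 4 := by field_simp
        _ = lam / 4 * ∑ v ∈ H.vertexSet, x v ^ 4 := by
            rw [← Finset.mul_sum]; ring
    · positivity
  unfold FinsetHypergraph.spectralRadius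
  have : (Nat.factorial 4 : ℝ) = 24 := by norm_num [Nat.factorial]
  rw [this]
  calc (24:ℝ) * sSup _ ≤ 24 * (lam / 4) := by
        exact mul_le_mul_of_nonneg_left key (by norm_num)
    _ = 6 * lam := by ring

end DaggerProof
section S2
variable {V : Type} [DecidableEq V]

namespace DaggerProof

lemma not_mem_both {m : ℕ} {g : Fin m → Finset V}
    (hdisj : ∀ p q : Fin m, (p:ℕ)+1 < (q:ℕ) → g p ∩ g q = ∅)
    {v : V} {p q : Fin m} (hpq : (p:ℕ)+1 < (q:ℕ)) (h1 : v ∈ g p) (h2 : v ∈ g q) : False := by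
  have h := hdisj p q hpq
  have : v ∈ g p ∩ g q := Finset.mem_inter.mpr ⟨h1, h2⟩
  rw [h] at this
  simp at this

lemma adj_of_mem {m : ℕ} {g : Fin m → Finset V}
    (hdisj : ∀ p q : Fin m, (p:ℕ)+1 < (q:ℕ) → g p ∩ g q = ∅)
    {v : V} {p q : Fin m} (h1 : v ∈ g p) (h2 : v ∈ g q) :
    (p:ℕ) = (q:ℕ) ∨ (p:ℕ)+1 = (q:ℕ) ∨ (q:ℕ)+1 = (p:ℕ) := by
  by_contra h
  push_neg at h
  obtain ⟨e1, e2, e3⟩ := h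
  rcases Nat.lt_or_ge (p:ℕ) (q:ℕ) with hlt | hge
  · exact not_mem_both hdisj (by omega) h1 h2
  · exact not_mem_both hdisj (by omega : (q:ℕ)+1 < (p:ℕ)) h2 h1

open Classical in
/-- Value function on a loose path: connectors get `C (j+1)`, free vertices of edge `j`
get `F j`. -/
noncomputable def pv {m : ℕ} (g : Fin m → Finset V) (C F : ℕ → ℝ) (v : V) : ℝ :=
  if h : ∃ pr : Fin m × Fin m, (pr.1:ℕ)+1 = (pr.2:ℕ) ∧ v ∈ g pr.1 ∧ v ∈ g pr.2
  then C ((h.choose.1 : ℕ) + 1)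
  else if h2 : ∃ j : Fin m, v ∈ g j then F (h2.choose : ℕ) else 1

lemma pv_conn {m : ℕ} {g : Fin m → Finset V}
    (hdisj : ∀ p q : Fin m, (p:ℕ)+1 < (q:ℕ) → g p ∩ g q = ∅)
    (C F : ℕ → ℝ) {v : V} {p q : Fin m} (hadj : (p:ℕ)+1 = (q:ℕ))
    (h1 : v ∈ g p) (h2 : v ∈ g q) :
    pv g C F v = C ((p:ℕ)+1) := by
  have hex : ∃ pr : Fin m × Fin m, (pr.1:ℕ)+1 = (pr.2:ℕ) ∧ v ∈ g pr.1 ∧ v ∈ g pr.2 :=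
    ⟨(p, q), hadj, h1, h2⟩
  rw [pv, dif_pos hex]
  obtain ⟨e1, e2, e3⟩ := hex.choose_spec
  congr 2
  rcases adj_of_mem hdisj e2 h1 with h | h | h
  · exact h
  · -- choose.1 + 1 = p ; then v ∈ g choose.1 and v ∈ g q with gap 2
    exact absurd (not_mem_both hdisj (by omega) e2 h2) (by simp)
  · -- p + 1 = choose.1 ; then v ∈ g p, v ∈ g choose.2 = choose.1+1 = p+2
    exact absurd (not_mem_both hdisj (by omega) h1 e3) (by simp)

lemma pv_free {m : ℕ} {g : Fin m → Finset V}
    (C F : ℕ → ℝ) {v : V} {j : Fin m} (hj : v ∈ g j)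
    (honly : ∀ j' : Fin m, j' ≠ j → v ∉ g j') :
    pv g C F v = F (j:ℕ) := by
  have hnex : ¬ ∃ pr : Fin m × Fin m, (pr.1:ℕ)+1 = (pr.2:ℕ) ∧ v ∈ g pr.1 ∧ v ∈ g pr.2 := by
    rintro ⟨⟨p, q⟩, e1, e2, e3⟩
    dsimp only at e1 e2 e3
    by_cases hp : p = j
    · subst hp
      refine honly q (fun h => ?_) e3
      rw [h] at e1
      omega
    · exact honly p hp e2
  have hex2 : ∃ j' : Fin m, v ∈ g j' := ⟨j, hj⟩
  rw [pv, dif_neg hnex, dif_pos hex2]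
  congr 1
  have := hex2.choose_spec
  by_contra hne
  exact honly hex2.choose (fun h => hne (by rw [h])) this

lemma mem_cases {m : ℕ} {g : Fin m → Finset V}
    (hdisj : ∀ p q : Fin m, (p:ℕ)+1 < (q:ℕ) → g p ∩ g q = ∅)
    {v : V} {j : Fin m} (hj : v ∈ g j) :
    (∀ j' : Fin m, j' ≠ j → v ∉ g j') ∨
      ∃ p q : Fin m, (p:ℕ)+1 = (q:ℕ) ∧ v ∈ g p ∧ v ∈ g q := by
  by_cases h : ∀ j' : Fin m, j' ≠ j → v ∉ g j'
  · exact Or.inl h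
  · right
    push_neg at h
    obtain ⟨j', hne, hmem'⟩ := h
    rcases adj_of_mem hdisj hmem' hj with h | h | h
    · exact absurd (Fin.ext h) hne
    · exact ⟨j', j, h, hmem', hj⟩
    · exact ⟨j, j', h, hj, hmem'⟩

lemma prod_const_card (s : Finset V) (y : V → ℝ) (Fc : ℝ) (h : ∀ u ∈ s, y u = Fc) :
    ∏ u ∈ s, y u = Fc ^ s.card := by
  rw [← Finset.prod_const]
  exact Finset.prod_congr rfl h

lemma prod_erase_all (e : Finset V) (he : e.card = 4) (y : V → ℝ) (v : V) (Fc : ℝ)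
    (hv : v ∈ e) (hfree : ∀ u ∈ e, u ≠ v → y u = Fc) :
    ∏ u ∈ e.erase v, y u = Fc ^ 3 := by
  have hc : (e.erase v).card = 3 := by rw [Finset.card_erase_of_mem hv, he]
  rw [prod_const_card _ y Fc, hc]
  intro u hu
  exact hfree u (Finset.mem_of_mem_erase hu) (Finset.ne_of_mem_erase hu)

lemma prod_erase_one (e : Finset V) (he : e.card = 4) (y : V → ℝ) (p v : V) (Fc : ℝ)
    (hp : p ∈ e) (hv : v ∈ e) (hpv : p ≠ v)
    (hfree : ∀ u ∈ e, u ≠ p → u ≠ v → y u = Fc) :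
    ∏ u ∈ e.erase v, y u = y p * Fc ^ 2 := by
  have hp' : p ∈ e.erase v := Finset.mem_erase.mpr ⟨hpv, hp⟩
  rw [← Finset.mul_prod_erase _ _ hp']
  congr 1
  have hc : ((e.erase v).erase p).card = 2 := by
    rw [Finset.card_erase_of_mem hp', Finset.card_erase_of_mem hv, he]
  rw [prod_const_card _ y Fc, hc]
  intro u hu
  have h1 := Finset.ne_of_mem_erase hu
  have h2 := Finset.ne_of_mem_erase (Finset.mem_of_mem_erase hu)
  have h3 := Finset.mem_of_mem_erase (Finset.mem_of_mem_erase hu)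
  exact hfree u h3 h1 h2

lemma prod_erase_two (e : Finset V) (he : e.card = 4) (y : V → ℝ) (p n v : V) (Fc : ℝ)
    (hp : p ∈ e) (hn : n ∈ e) (hv : v ∈ e)
    (hpn : p ≠ n) (hpv : p ≠ v) (hnv : n ≠ v)
    (hfree : ∀ u ∈ e, u ≠ p → u ≠ n → u ≠ v → y u = Fc) :
    ∏ u ∈ e.erase v, y u = y p * y n * Fc := by
  have hp' : p ∈ e.erase v := Finset.mem_erase.mpr ⟨hpv, hp⟩
  have hn' : n ∈ (e.erase v).erase p :=
    Finset.mem_erase.mpr ⟨hpn.symm, Finset.mem_erase.mpr ⟨hnv, hn⟩⟩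
  rw [← Finset.mul_prod_erase _ _ hp', ← Finset.mul_prod_erase _ _ hn', ← mul_assoc]
  congr 1
  have hc : (((e.erase v).erase p).erase n).card = 1 := by
    rw [Finset.card_erase_of_mem hn', Finset.card_erase_of_mem hp',
      Finset.card_erase_of_mem hv, he]
  rw [prod_const_card _ y Fc, hc, pow_one]
  intro u hu
  have h1 := Finset.ne_of_mem_erase hu
  have hu2 := Finset.mem_of_mem_erase hu
  have h2 := Finset.ne_of_mem_erase hu2
  have hu3 := Finset.mem_of_mem_erase hu2
  have h3 := Finset.ne_of_mem_erase hu3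
  exact hfree u (Finset.mem_of_mem_erase hu3) h2 h1 h3

end DaggerProof
end S2
section S3
variable {V : Type} [DecidableEq V]

namespace DaggerProof
open Finset

lemma one_path (H : FinsetHypergraph V) {m : ℕ} (hm : 0 < m) (g : Fin m → Finset V) (aa : V)
    (y : V → ℝ) (lam : ℝ) (C F : ℕ → ℝ)
    (hgE : ∀ j, g j ∈ H.edges)
    (hcard : ∀ j, (g j).card = 4)
    (hadj : ∀ p q : Fin m, (p:ℕ)+1 = (q:ℕ) → (g p ∩ g q).card = 1)
    (hdisj : ∀ p q : Fin m, (p:ℕ)+1 < (q:ℕ) → g p ∩ g q = ∅)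
    (ha : ∀ j : Fin m, aa ∈ g j ↔ (j:ℕ) = 0)
    (hy : ∀ v, (∃ j, v ∈ g j) → v ≠ aa → y v = pv g C F v)
    (hya : y aa = C 0)
    (hmem : ∀ e ∈ H.edges, ∀ v, (∃ j : Fin m, v ∈ g j) → v ≠ aa → v ∈ e → ∃ j, e = g j)
    (hCpos : ∀ s, 0 < C s) (hFpos : ∀ s, 0 < F s)
    (hn1 : ∀ s : ℕ, s + 2 ≤ m → C s * C (s+1) * F s ≤ lam * F s ^ 3)
    (hn2 : C (m-1) * F (m-1) ^ 2 ≤ lam * F (m-1) ^ 3)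
    (hn3 : ∀ s : ℕ, s + 3 ≤ m → C s * F s ^ 2 + C (s+2) * F (s+1) ^ 2 ≤ lam * C (s+1) ^ 3)
    (hn4 : ∀ s : ℕ, s + 2 = m → C s * F s ^ 2 + F (s+1) ^ 3 ≤ lam * C (s+1) ^ 3) :
    (∀ v, (∃ j, v ∈ g j) → v ≠ aa → 0 < y v ∧
      ∑ e ∈ H.edges.filter (fun e => v ∈ e), ∏ u ∈ e.erase v, y u ≤ lam * y v ^ 3) ∧
    ∏ u ∈ (g ⟨0, hm⟩).erase aa, y u = (if 2 ≤ m then C 1 * F 0 ^ 2 else F 0 ^ 3) := by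
  -- value of connectors
  have yconn : ∀ (p q : Fin m) (w : V), (p:ℕ)+1 = (q:ℕ) → w ∈ g p → w ∈ g q →
      y w = C ((p:ℕ)+1) := by
    intro p q w hpq h1' h2'
    have hwa : w ≠ aa := by
      intro h; subst h
      have := (ha q).mp h2'
      omega
    rw [hy w ⟨p, h1'⟩ hwa]
    exact pv_conn hdisj C F hpq h1' h2'
  have yfr : ∀ (j : Fin m) (w : V), w ∈ g j → w ≠ aa →
      (∀ j' : Fin m, j' ≠ j → w ∉ g j') → y w = F (j:ℕ) := by
    intro j w hw hwa honly
    rw [hy w ⟨j, hw⟩ hwa]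
    exact pv_free C F hw honly
  have getz : ∀ p q : Fin m, (p:ℕ)+1 = (q:ℕ) → ∃ z, g p ∩ g q = {z} :=
    fun p q h => Finset.card_eq_one.mp (hadj p q h)
  have gEq : ∀ p q : Fin m, (p:ℕ) = (q:ℕ) → g p = g q := by
    intro p q h
    have : p = q := Fin.ext h
    rw [this]
  have hfil : ∀ v, (∃ j, v ∈ g j) → v ≠ aa →
      H.edges.filter (fun e => v ∈ e) =
        (Finset.univ.filter (fun j => v ∈ g j)).image g := by
    intro v hv hva
    ext e
    simp only [Finset.mem_filter, Finset.mem_image, Finset.mem_univ, true_and]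
    constructor
    · rintro ⟨he, hve⟩
      obtain ⟨j, rfl⟩ := hmem e he v hv hva hve
      exact ⟨j, hve, rfl⟩
    · rintro ⟨j, hvj, rfl⟩
      exact ⟨hgE j, hvj⟩
  -- generic: value of the previous-connector of edge j (aa if j = 0)
  -- free-vertex characterization for edge j given knowledge of both neighbors
  have freechar : ∀ (j : Fin m) (u : V), u ∈ g j → u ≠ aa →
      (∀ j' : Fin m, (j':ℕ)+1 = (j:ℕ) → u ∉ g j') →
      (∀ j' : Fin m, (j:ℕ)+1 = (j':ℕ) → u ∉ g j') → y u = F (j:ℕ) := by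
    intro j u hu hua hprev hnext
    apply yfr j u hu hua
    intro j' hne hmem'
    rcases adj_of_mem hdisj hmem' hu with h | h | h
    · exact hne (Fin.ext h)
    · exact hprev j' h hmem'
    · exact hnext j' h hmem'
  constructor
  · -- main per-vertex bound
    rintro v ⟨j, hvj⟩ hva
    rcases mem_cases hdisj hvj with honly | ⟨p, q, hpq, hvp, hvq⟩
    · -- v is a free vertex of edge j
      have hyv : y v = F (j:ℕ) := by
        apply yfr j v hvj hva honly
      refine ⟨by rw [hyv]; exact hFpos _, ?_⟩
      have hset : Finset.univ.filter (fun j' => v ∈ g j') = {j} := by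
        ext j'
        simp only [Finset.mem_filter, Finset.mem_univ, true_and, Finset.mem_singleton]
        constructor
        · intro h
          by_contra hne
          exact honly j' hne h
        · rintro rfl; exact hvj
      rw [hfil v ⟨j, hvj⟩ hva, hset, Finset.image_singleton, Finset.sum_singleton, hyv]
      -- compute the product over (g j).erase v
      rcases Nat.lt_or_ge ((j:ℕ)+1) m with hlt | hge
      · -- j is not the last edge: next connector n exists
        obtain ⟨n, hn⟩ := getz j ⟨(j:ℕ)+1, hlt⟩ rfl
        have hnmem : n ∈ g j ∩ g ⟨(j:ℕ)+1, hlt⟩ := by rw [hn]; exact Finset.mem_singleton_self n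
        obtain ⟨hnj, hnq⟩ := Finset.mem_inter.mp hnmem
        have hyn : y n = C ((j:ℕ)+1) := yconn j ⟨(j:ℕ)+1, hlt⟩ n rfl hnj hnq
        have hnv : n ≠ v := by
          intro h; subst h
          exact honly ⟨(j:ℕ)+1, hlt⟩ (Fin.ne_of_val_ne (by simp +arith)) hnq
        have hnextfree : ∀ u ∈ g j, u ≠ n → ∀ j' : Fin m, (j:ℕ)+1 = (j':ℕ) → u ∉ g j' := by
          intro u hu hun j' hj' hu'
          have : g j' = g ⟨(j:ℕ)+1, hlt⟩ := gEq j' ⟨(j:ℕ)+1, hlt⟩ (by simp; omega)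
          rw [this] at hu'
          have : u ∈ g j ∩ g ⟨(j:ℕ)+1, hlt⟩ := Finset.mem_inter.mpr ⟨hu, hu'⟩
          rw [hn] at this
          exact hun (Finset.mem_singleton.mp this)
        rcases Nat.eq_zero_or_pos (j:ℕ) with hj0 | hjpos
        · -- first edge: prev distinguished is aa
          have haj : aa ∈ g j := (ha j).mpr hj0
          have hanaa : aa ≠ n := by
            intro h
            have := (ha ⟨(j:ℕ)+1, hlt⟩).mp (h ▸ hnq)
            simp at this
          have hprod : ∏ u ∈ (g j).erase v, y u = y aa * y n * F (j:ℕ) := by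
            apply prod_erase_two (g j) (hcard j) y aa n v (F (j:ℕ)) haj hnj hvj hanaa
              (Ne.symm hva) hnv
            intro u hu h1' h2' h3'
            apply freechar j u hu h1'
            · intro j' hj' _; omega
            · intro j' hj'
              exact hnextfree u hu h2' j' hj'
          rw [hprod, hya, hyn]
          have := hn1 (j:ℕ) (by omega)
          rw [hj0] at this ⊢
          exact this
        · -- middle edge: prev connector pz exists
          obtain ⟨pz, hpz⟩ := getz ⟨(j:ℕ)-1, by omega⟩ j (by simp; omega)
          have hpzmem : pz ∈ g ⟨(j:ℕ)-1, by omega⟩ ∩ g j := by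
            rw [hpz]; exact Finset.mem_singleton_self pz
          obtain ⟨hpzp, hpzj⟩ := Finset.mem_inter.mp hpzmem
          have hypz : y pz = C (j:ℕ) := by
            have h := yconn ⟨(j:ℕ)-1, by omega⟩ j pz (by simp; omega) hpzp hpzj
            rw [h]
            congr 1
            simp
            omega
          have hpzv : pz ≠ v := by
            intro h; subst h
            exact honly ⟨(j:ℕ)-1, by omega⟩ (Fin.ne_of_val_ne (by simp; omega)) hpzp
          have hpzn : pz ≠ n := by
            intro h; subst h
            exact not_mem_both hdisj (p := ⟨(j:ℕ)-1, by omega⟩) (q := ⟨(j:ℕ)+1, hlt⟩)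
              (by simp; omega) hpzp hnq
          have hprevfree : ∀ u ∈ g j, u ≠ pz → ∀ j' : Fin m, (j':ℕ)+1 = (j:ℕ) → u ∉ g j' := by
            intro u hu hupz j' hj' hu'
            have : g j' = g ⟨(j:ℕ)-1, by omega⟩ := gEq j' ⟨(j:ℕ)-1, by omega⟩ (by simp; omega)
            rw [this] at hu'
            have : u ∈ g ⟨(j:ℕ)-1, by omega⟩ ∩ g j := Finset.mem_inter.mpr ⟨hu', hu⟩
            rw [hpz] at this
            exact hupz (Finset.mem_singleton.mp this)
          have hprod : ∏ u ∈ (g j).erase v, y u = y pz * y n * F (j:ℕ) := by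
            apply prod_erase_two (g j) (hcard j) y pz n v (F (j:ℕ)) hpzj hnj hvj hpzn hpzv hnv
            intro u hu h1' h2' h3'
            have hua : u ≠ aa := by
              intro h; subst h
              have := (ha j).mp hu
              omega
            apply freechar j u hu hua
            · exact fun j' hj' => hprevfree u hu h1' j' hj'
            · exact fun j' hj' => hnextfree u hu h2' j' hj'
          rw [hprod, hypz, hyn]
          exact hn1 (j:ℕ) (by omega)
      · -- j is the last edge
        have hjm : (j:ℕ) = m - 1 := by have := j.isLt; omega
        rcases Nat.eq_zero_or_pos (j:ℕ) with hj0 | hjpos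
        · -- m = 1, only edge; distinguished aa
          have hm1 : m = 1 := by omega
          have haj : aa ∈ g j := (ha j).mpr hj0
          have hprod : ∏ u ∈ (g j).erase v, y u = y aa * F (j:ℕ) ^ 2 := by
            apply prod_erase_one (g j) (hcard j) y aa v (F (j:ℕ)) haj hvj (Ne.symm hva)
            intro u hu h1' h2'
            apply freechar j u hu h1'
            · intro j' hj' _; omega
            · intro j' hj' _
              have := j'.isLt
              omega
          rw [hprod, hya]
          have h0 : m - 1 = 0 := by omega
          rw [h0] at hn2
          rw [hj0]
          exact hn2
        · -- last edge, m ≥ 2; distinguished pz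
          obtain ⟨pz, hpz⟩ := getz ⟨(j:ℕ)-1, by omega⟩ j (by simp; omega)
          have hpzmem : pz ∈ g ⟨(j:ℕ)-1, by omega⟩ ∩ g j := by
            rw [hpz]; exact Finset.mem_singleton_self pz
          obtain ⟨hpzp, hpzj⟩ := Finset.mem_inter.mp hpzmem
          have hypz : y pz = C (j:ℕ) := by
            have h := yconn ⟨(j:ℕ)-1, by omega⟩ j pz (by simp; omega) hpzp hpzj
            rw [h]
            congr 1
            simp
            omega
          have hpzv : pz ≠ v := by
            intro h; subst h
            exact honly ⟨(j:ℕ)-1, by omega⟩ (Fin.ne_of_val_ne (by simp; omega)) hpzp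
          have hprod : ∏ u ∈ (g j).erase v, y u = y pz * F (j:ℕ) ^ 2 := by
            apply prod_erase_one (g j) (hcard j) y pz v (F (j:ℕ)) hpzj hvj hpzv
            intro u hu h1' h2'
            have hua : u ≠ aa := by
              intro h; subst h
              have := (ha j).mp hu
              omega
            apply freechar j u hu hua
            · intro j' hj' hu'
              have : g j' = g ⟨(j:ℕ)-1, by omega⟩ := gEq j' ⟨(j:ℕ)-1, by omega⟩ (by simp; omega)
              rw [this] at hu'
              have : u ∈ g ⟨(j:ℕ)-1, by omega⟩ ∩ g j := Finset.mem_inter.mpr ⟨hu', hu⟩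
              rw [hpz] at this
              exact h1' (Finset.mem_singleton.mp this)
            · intro j' hj' _
              have := j'.isLt
              omega
          rw [hprod, hypz, hjm]
          exact hn2
    · -- v is the connector between edges p and q (q = p+1)
      have hyv : y v = C ((p:ℕ)+1) := yconn p q v hpq hvp hvq
      refine ⟨by rw [hyv]; exact hCpos _, ?_⟩
      obtain ⟨z, hz⟩ := getz p q hpq
      have hvz : z = v := by
        have : v ∈ g p ∩ g q := Finset.mem_inter.mpr ⟨hvp, hvq⟩
        rw [hz] at this
        exact (Finset.mem_singleton.mp this).symm
      rw [hvz] at hz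
      have hset : Finset.univ.filter (fun j' => v ∈ g j') = {p, q} := by
        ext j'
        simp only [Finset.mem_filter, Finset.mem_univ, true_and, Finset.mem_insert,
          Finset.mem_singleton]
        constructor
        · intro h
          rcases adj_of_mem hdisj h hvp with he | he | he
          · exact Or.inl (Fin.ext he)
          · exact absurd (not_mem_both hdisj (by omega) h hvq) not_false
          · exact Or.inr (Fin.ext (by omega))
        · rintro (rfl | rfl)
          exacts [hvp, hvq]
      have hgpq : g p ≠ g q := by
        intro h
        have h1' := hadj p q hpq
        rw [h, Finset.inter_self, hcard q] at h1'
        omega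
      rw [hfil v ⟨p, hvp⟩ hva, hset, Finset.image_insert, Finset.image_singleton,
        Finset.sum_pair (fun h => hgpq h), hyv]
      -- product over (g p).erase z
      have hfreep : ∀ u ∈ g p, u ≠ v → ∀ j' : Fin m, (p:ℕ)+1 = (j':ℕ) → u ∉ g j' := by
        intro u hu huv j' hj' hu'
        have : g j' = g q := gEq j' q (by omega)
        rw [this] at hu'
        have : u ∈ g p ∩ g q := Finset.mem_inter.mpr ⟨hu, hu'⟩
        rw [hz] at this
        exact huv (Finset.mem_singleton.mp this)
      have hterm1 : ∏ u ∈ (g p).erase v, y u = C (p:ℕ) * F (p:ℕ) ^ 2 := by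
        rcases Nat.eq_zero_or_pos (p:ℕ) with hp0 | hppos
        · have hap : aa ∈ g p := (ha p).mpr hp0
          have hprod : ∏ u ∈ (g p).erase v, y u = y aa * F (p:ℕ) ^ 2 := by
            apply prod_erase_one (g p) (hcard p) y aa v (F (p:ℕ)) hap hvp (Ne.symm hva)
            intro u hu h1' h2'
            apply freechar p u hu h1'
            · intro j' hj' _; omega
            · exact fun j' hj' => hfreep u hu h2' j' hj'
          rw [hprod, hya, hp0]
        · obtain ⟨pz, hpz⟩ := getz ⟨(p:ℕ)-1, by omega⟩ p (by simp; omega)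
          have hpzmem : pz ∈ g ⟨(p:ℕ)-1, by omega⟩ ∩ g p := by
            rw [hpz]; exact Finset.mem_singleton_self pz
          obtain ⟨hpzp, hpzj⟩ := Finset.mem_inter.mp hpzmem
          have hypz : y pz = C (p:ℕ) := by
            have h := yconn ⟨(p:ℕ)-1, by omega⟩ p pz (by simp; omega) hpzp hpzj
            rw [h]
            congr 1
            simp
            omega
          have hpzv2 : pz ≠ v := by
            intro h; subst h
            exact not_mem_both hdisj (p := ⟨(p:ℕ)-1, by omega⟩) (q := q)
              (by simp; omega) hpzp hvq
          have hprod : ∏ u ∈ (g p).erase v, y u = y pz * F (p:ℕ) ^ 2 := by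
            apply prod_erase_one (g p) (hcard p) y pz v (F (p:ℕ)) hpzj hvp hpzv2
            intro u hu h1' h2'
            have hua : u ≠ aa := by
              intro h; subst h
              have := (ha p).mp hu
              omega
            apply freechar p u hu hua
            · intro j' hj' hu'
              have : g j' = g ⟨(p:ℕ)-1, by omega⟩ := gEq j' ⟨(p:ℕ)-1, by omega⟩ (by simp; omega)
              rw [this] at hu'
              have : u ∈ g ⟨(p:ℕ)-1, by omega⟩ ∩ g p := Finset.mem_inter.mpr ⟨hu', hu⟩
              rw [hpz] at this
              exact h1' (Finset.mem_singleton.mp this)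
            · exact fun j' hj' => hfreep u hu h2' j' hj'
          rw [hprod, hypz]
      rw [hterm1]
      -- product over (g q).erase z
      have hfreeqprev : ∀ u ∈ g q, u ≠ v → ∀ j' : Fin m, (j':ℕ)+1 = (q:ℕ) → u ∉ g j' := by
        intro u hu huv j' hj' hu'
        have : g j' = g p := gEq j' p (by omega)
        rw [this] at hu'
        have : u ∈ g p ∩ g q := Finset.mem_inter.mpr ⟨hu', hu⟩
        rw [hz] at this
        exact huv (Finset.mem_singleton.mp this)
      have huaq : ∀ u ∈ g q, u ≠ aa := by
        intro u hu h; subst h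
        have := (ha q).mp hu
        omega
      rcases Nat.lt_or_ge ((q:ℕ)+1) m with hlt | hge
      · -- q not last
        obtain ⟨n, hn⟩ := getz q ⟨(q:ℕ)+1, hlt⟩ rfl
        have hnmem : n ∈ g q ∩ g ⟨(q:ℕ)+1, hlt⟩ := by rw [hn]; exact Finset.mem_singleton_self n
        obtain ⟨hnj, hnq⟩ := Finset.mem_inter.mp hnmem
        have hyn : y n = C ((q:ℕ)+1) := yconn q ⟨(q:ℕ)+1, hlt⟩ n rfl hnj hnq
        have hnv2 : n ≠ v := by
          intro h; subst h
          exact not_mem_both hdisj (p := p) (q := ⟨(q:ℕ)+1, hlt⟩) (by simp; omega) hvp hnq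
        have hprod : ∏ u ∈ (g q).erase v, y u = y n * F (q:ℕ) ^ 2 := by
          apply prod_erase_one (g q) (hcard q) y n v (F (q:ℕ)) hnj hvq hnv2
          intro u hu h1' h2'
          apply freechar q u hu (huaq u hu)
          · exact fun j' hj' => hfreeqprev u hu h2' j' hj'
          · intro j' hj' hu'
            have : g j' = g ⟨(q:ℕ)+1, hlt⟩ := gEq j' ⟨(q:ℕ)+1, hlt⟩ (by simp; omega)
            rw [this] at hu'
            have : u ∈ g q ∩ g ⟨(q:ℕ)+1, hlt⟩ := Finset.mem_inter.mpr ⟨hu, hu'⟩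
            rw [hn] at this
            exact h1' (Finset.mem_singleton.mp this)
        rw [hprod, hyn]
        have hq : (q:ℕ) = (p:ℕ)+1 := hpq.symm
        rw [hq]
        exact hn3 (p:ℕ) (by omega)
      · -- q is last
        have hqm : (q:ℕ) = m - 1 := by have := q.isLt; omega
        have hprod : ∏ u ∈ (g q).erase v, y u = F (q:ℕ) ^ 3 := by
          apply prod_erase_all (g q) (hcard q) y v (F (q:ℕ)) hvq
          intro u hu h1'
          apply freechar q u hu (huaq u hu)
          · exact fun j' hj' => hfreeqprev u hu h1' j' hj'
          · intro j' hj' _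
            have := j'.isLt
            omega
        rw [hprod]
        have hq : (q:ℕ) = (p:ℕ)+1 := hpq.symm
        rw [hq]
        exact hn4 (p:ℕ) (by omega)
  · -- the contribution product at aa
    have haj : aa ∈ g ⟨0, hm⟩ := (ha ⟨0, hm⟩).mpr rfl
    by_cases h2m : 2 ≤ m
    · obtain ⟨n, hn⟩ := getz ⟨0, hm⟩ ⟨1, by omega⟩ rfl
      have hnmem : n ∈ g ⟨0, hm⟩ ∩ g ⟨1, by omega⟩ := by
        rw [hn]; exact Finset.mem_singleton_self n
      obtain ⟨hnj, hnq⟩ := Finset.mem_inter.mp hnmem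
      have hyn : y n = C 1 := yconn ⟨0, hm⟩ ⟨1, by omega⟩ n rfl hnj hnq
      have hanaa : n ≠ aa := by
        intro h; subst h
        have := (ha ⟨1, by omega⟩).mp hnq
        simp at this
      have hprod : ∏ u ∈ (g ⟨0, hm⟩).erase aa, y u = y n * F 0 ^ 2 := by
        apply prod_erase_one (g ⟨0, hm⟩) (hcard _) y n aa (F 0) hnj haj hanaa
        intro u hu h1' h2'
        have h := freechar ⟨0, hm⟩ u hu h2'
        simp only [Fin.val_mk] at h ⊢
        apply h
        · intro j' hj' _; omega
        · intro j' hj' hu'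
          have : g j' = g ⟨1, by omega⟩ := gEq j' ⟨1, by omega⟩ (by simp; omega)
          rw [this] at hu'
          have : u ∈ g ⟨0, hm⟩ ∩ g ⟨1, by omega⟩ := Finset.mem_inter.mpr ⟨hu, hu'⟩
          rw [hn] at this
          exact h1' (Finset.mem_singleton.mp this)
      rw [hprod, hyn, if_pos h2m]
    · have hm1 : m = 1 := by omega
      have hprod : ∏ u ∈ (g ⟨0, hm⟩).erase aa, y u = F 0 ^ 3 := by
        apply prod_erase_all (g ⟨0, hm⟩) (hcard _) y aa (F 0) haj
        intro u hu h1'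
        have h := freechar ⟨0, hm⟩ u hu h1'
        simp only [Fin.val_mk] at h ⊢
        apply h
        · intro j' hj' _; omega
        · intro j' hj' _
          have := j'.isLt
          omega
      rw [hprod, if_neg h2m]

end DaggerProof
end S3
section S4
variable {V : Type} [DecidableEq V]

namespace DaggerProof
open Finset

set_option maxHeartbeats 1000000 in
lemma master (H : FinsetHypergraph V) {i j k l : ℕ}
    (hi : 0 < i) (hj : 0 < j) (hk : 0 < k) (hl : 0 < l)
    (hd : H.IsDagger4 i j k l)
    (lam : ℝ) (hlam : 0 ≤ lam)
    (A0 A1 A2 A3 : ℝ) (hA0 : 0 < A0) (hA1 : 0 < A1) (hA2 : 0 < A2) (hA3 : 0 < A3)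
    (C1 F1 C2 F2 C3 F3 C4 F4 : ℕ → ℝ)
    (hC1p : ∀ s, 0 < C1 s) (hF1p : ∀ s, 0 < F1 s)
    (hC2p : ∀ s, 0 < C2 s) (hF2p : ∀ s, 0 < F2 s)
    (hC3p : ∀ s, 0 < C3 s) (hF3p : ∀ s, 0 < F3 s)
    (hC4p : ∀ s, 0 < C4 s) (hF4p : ∀ s, 0 < F4 s)
    (hC10 : C1 0 = A0) (hC20 : C2 0 = A1) (hC30 : C3 0 = A2) (hC40 : C4 0 = A3)
    (p1h1 : ∀ s : ℕ, s + 2 ≤ i → C1 s * C1 (s+1) * F1 s ≤ lam * F1 s ^ 3)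
    (p1h2 : C1 (i-1) * F1 (i-1) ^ 2 ≤ lam * F1 (i-1) ^ 3)
    (p1h3 : ∀ s : ℕ, s + 3 ≤ i → C1 s * F1 s ^ 2 + C1 (s+2) * F1 (s+1) ^ 2 ≤ lam * C1 (s+1) ^ 3)
    (p1h4 : ∀ s : ℕ, s + 2 = i → C1 s * F1 s ^ 2 + F1 (s+1) ^ 3 ≤ lam * C1 (s+1) ^ 3)
    (p2h1 : ∀ s : ℕ, s + 2 ≤ j → C2 s * C2 (s+1) * F2 s ≤ lam * F2 s ^ 3)
    (p2h2 : C2 (j-1) * F2 (j-1) ^ 2 ≤ lam * F2 (j-1) ^ 3)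
    (p2h3 : ∀ s : ℕ, s + 3 ≤ j → C2 s * F2 s ^ 2 + C2 (s+2) * F2 (s+1) ^ 2 ≤ lam * C2 (s+1) ^ 3)
    (p2h4 : ∀ s : ℕ, s + 2 = j → C2 s * F2 s ^ 2 + F2 (s+1) ^ 3 ≤ lam * C2 (s+1) ^ 3)
    (p3h1 : ∀ s : ℕ, s + 2 ≤ k → C3 s * C3 (s+1) * F3 s ≤ lam * F3 s ^ 3)
    (p3h2 : C3 (k-1) * F3 (k-1) ^ 2 ≤ lam * F3 (k-1) ^ 3)
    (p3h3 : ∀ s : ℕ, s + 3 ≤ k → C3 s * F3 s ^ 2 + C3 (s+2) * F3 (s+1) ^ 2 ≤ lam * C3 (s+1) ^ 3)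
    (p3h4 : ∀ s : ℕ, s + 2 = k → C3 s * F3 s ^ 2 + F3 (s+1) ^ 3 ≤ lam * C3 (s+1) ^ 3)
    (p4h1 : ∀ s : ℕ, s + 2 ≤ l → C4 s * C4 (s+1) * F4 s ≤ lam * F4 s ^ 3)
    (p4h2 : C4 (l-1) * F4 (l-1) ^ 2 ≤ lam * F4 (l-1) ^ 3)
    (p4h3 : ∀ s : ℕ, s + 3 ≤ l → C4 s * F4 s ^ 2 + C4 (s+2) * F4 (s+1) ^ 2 ≤ lam * C4 (s+1) ^ 3)
    (p4h4 : ∀ s : ℕ, s + 2 = l → C4 s * F4 s ^ 2 + F4 (s+1) ^ 3 ≤ lam * C4 (s+1) ^ 3)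
    (hcen0 : A1 * A2 * A3 + (if 2 ≤ i then C1 1 * F1 0 ^ 2 else F1 0 ^ 3) ≤ lam * A0 ^ 3)
    (hcen1 : A0 * A2 * A3 + (if 2 ≤ j then C2 1 * F2 0 ^ 2 else F2 0 ^ 3) ≤ lam * A1 ^ 3)
    (hcen2 : A0 * A1 * A3 + (if 2 ≤ k then C3 1 * F3 0 ^ 2 else F3 0 ^ 3) ≤ lam * A2 ^ 3)
    (hcen3 : A0 * A1 * A2 + (if 2 ≤ l then C4 1 * F4 0 ^ 2 else F4 0 ^ 3) ≤ lam * A3 ^ 3) :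
    H.spectralRadius 4 ≤ 6 * lam := by
  classical
  obtain ⟨huni, a, g₁, g₂, g₃, g₄, hainj, he0E, hap1, hap2, hap3, hap4,
    d12, d13, d14, d23, d24, d34, hclass⟩ := hd
  set e0 : Finset V := Finset.univ.image a with he0def
  have hane : ∀ s t : Fin 4, s ≠ t → a s ≠ a t := fun s t hst h => hst (hainj h)
  have hae0 : ∀ t : Fin 4, a t ∈ e0 := fun t => Finset.mem_image.mpr ⟨t, Finset.mem_univ t, rfl⟩
  set y : V → ℝ := fun v =>
    if v = a 0 then A0 else if v = a 1 then A1 else if v = a 2 then A2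
    else if v = a 3 then A3
    else if ∃ x, v ∈ g₁ x then pv g₁ C1 F1 v
    else if ∃ x, v ∈ g₂ x then pv g₂ C2 F2 v
    else if ∃ x, v ∈ g₃ x then pv g₃ C3 F3 v
    else if ∃ x, v ∈ g₄ x then pv g₄ C4 F4 v
    else 1 with hydef
  have ya0 : y (a 0) = A0 := by rw [hydef]; simp
  have ya1 : y (a 1) = A1 := by
    rw [hydef]; simp only [if_neg (hane 1 0 (by decide))]; simp
  have ya2 : y (a 2) = A2 := by
    rw [hydef]
    simp only [if_neg (hane 2 0 (by decide)), if_neg (hane 2 1 (by decide))]; simp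
  have ya3 : y (a 3) = A3 := by
    rw [hydef]
    simp only [if_neg (hane 3 0 (by decide)), if_neg (hane 3 1 (by decide)),
      if_neg (hane 3 2 (by decide))]; simp
  -- structural facts for path 1
  obtain ⟨⟨adj1, dis1⟩, gE1, gne1, int1, ain1⟩ := hap1
  have card1 : ∀ x, (g₁ x).card = 4 := fun x => huni _ (gE1 x)
  have nota1 : ∀ v, (∃ x, v ∈ g₁ x) → v ∈ e0 → v = a 0 := by
    rintro v ⟨x, hx⟩ hin
    have hmem : v ∈ pathVerts g₁ ∩ e0 :=
      Finset.mem_inter.mpr ⟨Finset.mem_biUnion.mpr ⟨x, Finset.mem_univ x, hx⟩, hin⟩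
    rw [int1] at hmem
    exact Finset.mem_singleton.mp hmem
  -- structural facts for path 2
  obtain ⟨⟨adj2, dis2⟩, gE2, gne2, int2, ain2⟩ := hap2
  have card2 : ∀ x, (g₂ x).card = 4 := fun x => huni _ (gE2 x)
  have nota2 : ∀ v, (∃ x, v ∈ g₂ x) → v ∈ e0 → v = a 1 := by
    rintro v ⟨x, hx⟩ hin
    have hmem : v ∈ pathVerts g₂ ∩ e0 :=
      Finset.mem_inter.mpr ⟨Finset.mem_biUnion.mpr ⟨x, Finset.mem_univ x, hx⟩, hin⟩
    rw [int2] at hmem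
    exact Finset.mem_singleton.mp hmem
  -- structural facts for path 3
  obtain ⟨⟨adj3, dis3⟩, gE3, gne3, int3, ain3⟩ := hap3
  have card3 : ∀ x, (g₃ x).card = 4 := fun x => huni _ (gE3 x)
  have nota3 : ∀ v, (∃ x, v ∈ g₃ x) → v ∈ e0 → v = a 2 := by
    rintro v ⟨x, hx⟩ hin
    have hmem : v ∈ pathVerts g₃ ∩ e0 :=
      Finset.mem_inter.mpr ⟨Finset.mem_biUnion.mpr ⟨x, Finset.mem_univ x, hx⟩, hin⟩
    rw [int3] at hmem
    exact Finset.mem_singleton.mp hmem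
  -- structural facts for path 4
  obtain ⟨⟨adj4, dis4⟩, gE4, gne4, int4, ain4⟩ := hap4
  have card4 : ∀ x, (g₄ x).card = 4 := fun x => huni _ (gE4 x)
  have nota4 : ∀ v, (∃ x, v ∈ g₄ x) → v ∈ e0 → v = a 3 := by
    rintro v ⟨x, hx⟩ hin
    have hmem : v ∈ pathVerts g₄ ∩ e0 :=
      Finset.mem_inter.mpr ⟨Finset.mem_biUnion.mpr ⟨x, Finset.mem_univ x, hx⟩, hin⟩
    rw [int4] at hmem
    exact Finset.mem_singleton.mp hmem
  have dhelp : ∀ {m1 m2 : ℕ} (ga : Fin m1 → Finset V) (gb : Fin m2 → Finset V),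
      pathVerts ga ∩ pathVerts gb = ∅ →
      ∀ v, (∃ x, v ∈ ga x) → (∃ x, v ∈ gb x) → False := by
    rintro m1 m2 ga gb hd v ⟨x1, h1⟩ ⟨x2, h2⟩
    have : v ∈ pathVerts ga ∩ pathVerts gb :=
      Finset.mem_inter.mpr ⟨Finset.mem_biUnion.mpr ⟨x1, Finset.mem_univ x1, h1⟩,
        Finset.mem_biUnion.mpr ⟨x2, Finset.mem_univ x2, h2⟩⟩
    rw [hd] at this
    simp at this
  have hy1 : ∀ v, (∃ x, v ∈ g₁ x) → v ≠ a 0 → y v = pv g₁ C1 F1 v := by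
    intro v hvg hva
    have hve0 : v ∉ e0 := fun hin => hva (nota1 v hvg hin)
    have hna : ∀ t' : Fin 4, v ≠ a t' := fun t' h => hve0 (h ▸ hae0 t')
    rw [hydef]
    simp only [if_neg (hna 0), if_neg (hna 1), if_neg (hna 2), if_neg (hna 3)]
    rw [if_pos hvg]
  have hy2 : ∀ v, (∃ x, v ∈ g₂ x) → v ≠ a 1 → y v = pv g₂ C2 F2 v := by
    intro v hvg hva
    have hve0 : v ∉ e0 := fun hin => hva (nota2 v hvg hin)
    have hna : ∀ t' : Fin 4, v ≠ a t' := fun t' h => hve0 (h ▸ hae0 t')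
    rw [hydef]
    simp only [if_neg (hna 0), if_neg (hna 1), if_neg (hna 2), if_neg (hna 3)]
    rw [if_neg (fun hx => dhelp g₁ g₂ d12 v hx hvg)]
    rw [if_pos hvg]
  have hy3 : ∀ v, (∃ x, v ∈ g₃ x) → v ≠ a 2 → y v = pv g₃ C3 F3 v := by
    intro v hvg hva
    have hve0 : v ∉ e0 := fun hin => hva (nota3 v hvg hin)
    have hna : ∀ t' : Fin 4, v ≠ a t' := fun t' h => hve0 (h ▸ hae0 t')
    rw [hydef]
    simp only [if_neg (hna 0), if_neg (hna 1), if_neg (hna 2), if_neg (hna 3)]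
    rw [if_neg (fun hx => dhelp g₁ g₃ d13 v hx hvg)]
    rw [if_neg (fun hx => dhelp g₂ g₃ d23 v hx hvg)]
    rw [if_pos hvg]
  have hy4 : ∀ v, (∃ x, v ∈ g₄ x) → v ≠ a 3 → y v = pv g₄ C4 F4 v := by
    intro v hvg hva
    have hve0 : v ∉ e0 := fun hin => hva (nota4 v hvg hin)
    have hna : ∀ t' : Fin 4, v ≠ a t' := fun t' h => hve0 (h ▸ hae0 t')
    rw [hydef]
    simp only [if_neg (hna 0), if_neg (hna 1), if_neg (hna 2), if_neg (hna 3)]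
    rw [if_neg (fun hx => dhelp g₁ g₄ d14 v hx hvg)]
    rw [if_neg (fun hx => dhelp g₂ g₄ d24 v hx hvg)]
    rw [if_neg (fun hx => dhelp g₃ g₄ d34 v hx hvg)]
    rw [if_pos hvg]
  have hmem1 : ∀ e ∈ H.edges, ∀ v, (∃ x : Fin i, v ∈ g₁ x) → v ≠ a 0 → v ∈ e →
      ∃ x, e = g₁ x := by
    intro e he v hvg hva hve
    rcases hclass e he with rfl | ⟨x, rfl⟩ | ⟨x, rfl⟩ | ⟨x, rfl⟩ | ⟨x, rfl⟩
    · exact absurd (nota1 v hvg hve) hva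
    · exact ⟨x, rfl⟩
    · exact absurd (dhelp g₁ g₂ d12 v hvg ⟨x, hve⟩) not_false
    · exact absurd (dhelp g₁ g₃ d13 v hvg ⟨x, hve⟩) not_false
    · exact absurd (dhelp g₁ g₄ d14 v hvg ⟨x, hve⟩) not_false
  have hmem2 : ∀ e ∈ H.edges, ∀ v, (∃ x : Fin j, v ∈ g₂ x) → v ≠ a 1 → v ∈ e →
      ∃ x, e = g₂ x := by
    intro e he v hvg hva hve
    rcases hclass e he with rfl | ⟨x, rfl⟩ | ⟨x, rfl⟩ | ⟨x, rfl⟩ | ⟨x, rfl⟩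
    · exact absurd (nota2 v hvg hve) hva
    · exact absurd (dhelp g₁ g₂ d12 v ⟨x, hve⟩ hvg) not_false
    · exact ⟨x, rfl⟩
    · exact absurd (dhelp g₂ g₃ d23 v hvg ⟨x, hve⟩) not_false
    · exact absurd (dhelp g₂ g₄ d24 v hvg ⟨x, hve⟩) not_false
  have hmem3 : ∀ e ∈ H.edges, ∀ v, (∃ x : Fin k, v ∈ g₃ x) → v ≠ a 2 → v ∈ e →
      ∃ x, e = g₃ x := by
    intro e he v hvg hva hve
    rcases hclass e he with rfl | ⟨x, rfl⟩ | ⟨x, rfl⟩ | ⟨x, rfl⟩ | ⟨x, rfl⟩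
    · exact absurd (nota3 v hvg hve) hva
    · exact absurd (dhelp g₁ g₃ d13 v ⟨x, hve⟩ hvg) not_false
    · exact absurd (dhelp g₂ g₃ d23 v ⟨x, hve⟩ hvg) not_false
    · exact ⟨x, rfl⟩
    · exact absurd (dhelp g₃ g₄ d34 v hvg ⟨x, hve⟩) not_false
  have hmem4 : ∀ e ∈ H.edges, ∀ v, (∃ x : Fin l, v ∈ g₄ x) → v ≠ a 3 → v ∈ e →
      ∃ x, e = g₄ x := by
    intro e he v hvg hva hve
    rcases hclass e he with rfl | ⟨x, rfl⟩ | ⟨x, rfl⟩ | ⟨x, rfl⟩ | ⟨x, rfl⟩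
    · exact absurd (nota4 v hvg hve) hva
    · exact absurd (dhelp g₁ g₄ d14 v ⟨x, hve⟩ hvg) not_false
    · exact absurd (dhelp g₂ g₄ d24 v ⟨x, hve⟩ hvg) not_false
    · exact absurd (dhelp g₃ g₄ d34 v ⟨x, hve⟩ hvg) not_false
    · exact ⟨x, rfl⟩
  have P1 := one_path H hi g₁ (a 0) y lam C1 F1 gE1 card1 adj1 dis1 ain1
    hy1 (by rw [ya0, hC10]) hmem1 hC1p hF1p p1h1 p1h2 p1h3 p1h4
  have P2 := one_path H hj g₂ (a 1) y lam C2 F2 gE2 card2 adj2 dis2 ain2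
    hy2 (by rw [ya1, hC20]) hmem2 hC2p hF2p p2h1 p2h2 p2h3 p2h4
  have P3 := one_path H hk g₃ (a 2) y lam C3 F3 gE3 card3 adj3 dis3 ain3
    hy3 (by rw [ya2, hC30]) hmem3 hC3p hF3p p3h1 p3h2 p3h3 p3h4
  have P4 := one_path H hl g₄ (a 3) y lam C4 F4 gE4 card4 adj4 dis4 ain4
    hy4 (by rw [ya3, hC40]) hmem4 hC4p hF4p p4h1 p4h2 p4h3 p4h4
  apply spec_le H lam hlam huni y
  · intro v hv
    by_cases hve0 : v ∈ e0
    · rw [he0def] at hve0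
      obtain ⟨t, _, rfl⟩ := Finset.mem_image.mp hve0
      fin_cases t
      · exact lt_of_lt_of_eq hA0 ya0.symm
      · exact lt_of_lt_of_eq hA1 ya1.symm
      · exact lt_of_lt_of_eq hA2 ya2.symm
      · exact lt_of_lt_of_eq hA3 ya3.symm
    · obtain ⟨e, he, hvee⟩ := Finset.mem_biUnion.mp hv
      simp only [id] at hvee
      rcases hclass e he with rfl | ⟨x, rfl⟩ | ⟨x, rfl⟩ | ⟨x, rfl⟩ | ⟨x, rfl⟩
      · exact absurd hvee hve0
      · exact (P1.1 v ⟨x, hvee⟩ (fun h => hve0 (h ▸ hae0 0))).1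
      · exact (P2.1 v ⟨x, hvee⟩ (fun h => hve0 (h ▸ hae0 1))).1
      · exact (P3.1 v ⟨x, hvee⟩ (fun h => hve0 (h ▸ hae0 2))).1
      · exact (P4.1 v ⟨x, hvee⟩ (fun h => hve0 (h ▸ hae0 3))).1
  · intro v hv
    by_cases hve0 : v ∈ e0
    · -- center vertices
      rw [he0def] at hve0
      obtain ⟨t, _, rfl⟩ := Finset.mem_image.mp hve0
      fin_cases t
      · -- center t = 0
        show ∑ e ∈ H.edges.filter (fun e => a 0 ∈ e), ∏ u ∈ e.erase (a 0), y u ≤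
          lam * y (a 0) ^ 3
        have hfilt : H.edges.filter (fun e => a 0 ∈ e) = {e0, g₁ ⟨0, hi⟩} := by
          ext e
          simp only [Finset.mem_filter, Finset.mem_insert, Finset.mem_singleton]
          constructor
          · rintro ⟨he, hin⟩
            rcases hclass e he with rfl | ⟨x, rfl⟩ | ⟨x, rfl⟩ | ⟨x, rfl⟩ | ⟨x, rfl⟩
            · exact Or.inl rfl
            · right
              have hx0 : (x:ℕ) = 0 := (ain1 x).mp hin
              have hxx : x = ⟨0, hi⟩ := Fin.ext (by simpa using hx0)
              rw [hxx]
            · exact absurd (hainj (nota2 (a 0) ⟨x, hin⟩ (hae0 0))) (by decide)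
            · exact absurd (hainj (nota3 (a 0) ⟨x, hin⟩ (hae0 0))) (by decide)
            · exact absurd (hainj (nota4 (a 0) ⟨x, hin⟩ (hae0 0))) (by decide)
          · rintro (rfl | rfl)
            · exact ⟨he0E, hae0 0⟩
            · exact ⟨gE1 _, (ain1 ⟨0, hi⟩).mpr rfl⟩
        rw [hfilt, Finset.sum_pair (Ne.symm (gne1 ⟨0, hi⟩))]
        have hprodc : ∏ u ∈ e0.erase (a 0), y u = A1 * A2 * A3 := by
          rw [he0def, ← Finset.image_erase hainj,
            Finset.prod_image (fun x _ x' _ h => hainj h)]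
          have huniv : (Finset.univ.erase (0 : Fin 4)) = {1, 2, 3} := by decide
          rw [huniv, Finset.prod_insert (by decide), Finset.prod_insert (by decide),
            Finset.prod_singleton, ya1, ya2, ya3]
          ring
        rw [hprodc, P1.2, ya0]
        exact hcen0
      · -- center t = 1
        show ∑ e ∈ H.edges.filter (fun e => a 1 ∈ e), ∏ u ∈ e.erase (a 1), y u ≤
          lam * y (a 1) ^ 3
        have hfilt : H.edges.filter (fun e => a 1 ∈ e) = {e0, g₂ ⟨0, hj⟩} := by
          ext e
          simp only [Finset.mem_filter, Finset.mem_insert, Finset.mem_singleton]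
          constructor
          · rintro ⟨he, hin⟩
            rcases hclass e he with rfl | ⟨x, rfl⟩ | ⟨x, rfl⟩ | ⟨x, rfl⟩ | ⟨x, rfl⟩
            · exact Or.inl rfl
            · exact absurd (hainj (nota1 (a 1) ⟨x, hin⟩ (hae0 1))) (by decide)
            · right
              have hx0 : (x:ℕ) = 0 := (ain2 x).mp hin
              have hxx : x = ⟨0, hj⟩ := Fin.ext (by simpa using hx0)
              rw [hxx]
            · exact absurd (hainj (nota3 (a 1) ⟨x, hin⟩ (hae0 1))) (by decide)
            · exact absurd (hainj (nota4 (a 1) ⟨x, hin⟩ (hae0 1))) (by decide)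
          · rintro (rfl | rfl)
            · exact ⟨he0E, hae0 1⟩
            · exact ⟨gE2 _, (ain2 ⟨0, hj⟩).mpr rfl⟩
        rw [hfilt, Finset.sum_pair (Ne.symm (gne2 ⟨0, hj⟩))]
        have hprodc : ∏ u ∈ e0.erase (a 1), y u = A0 * A2 * A3 := by
          rw [he0def, ← Finset.image_erase hainj,
            Finset.prod_image (fun x _ x' _ h => hainj h)]
          have huniv : (Finset.univ.erase (1 : Fin 4)) = {0, 2, 3} := by decide
          rw [huniv, Finset.prod_insert (by decide), Finset.prod_insert (by decide),
            Finset.prod_singleton, ya0, ya2, ya3]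
          ring
        rw [hprodc, P2.2, ya1]
        exact hcen1
      · -- center t = 2
        show ∑ e ∈ H.edges.filter (fun e => a 2 ∈ e), ∏ u ∈ e.erase (a 2), y u ≤
          lam * y (a 2) ^ 3
        have hfilt : H.edges.filter (fun e => a 2 ∈ e) = {e0, g₃ ⟨0, hk⟩} := by
          ext e
          simp only [Finset.mem_filter, Finset.mem_insert, Finset.mem_singleton]
          constructor
          · rintro ⟨he, hin⟩
            rcases hclass e he with rfl | ⟨x, rfl⟩ | ⟨x, rfl⟩ | ⟨x, rfl⟩ | ⟨x, rfl⟩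
            · exact Or.inl rfl
            · exact absurd (hainj (nota1 (a 2) ⟨x, hin⟩ (hae0 2))) (by decide)
            · exact absurd (hainj (nota2 (a 2) ⟨x, hin⟩ (hae0 2))) (by decide)
            · right
              have hx0 : (x:ℕ) = 0 := (ain3 x).mp hin
              have hxx : x = ⟨0, hk⟩ := Fin.ext (by simpa using hx0)
              rw [hxx]
            · exact absurd (hainj (nota4 (a 2) ⟨x, hin⟩ (hae0 2))) (by decide)
          · rintro (rfl | rfl)
            · exact ⟨he0E, hae0 2⟩
            · exact ⟨gE3 _, (ain3 ⟨0, hk⟩).mpr rfl⟩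
        rw [hfilt, Finset.sum_pair (Ne.symm (gne3 ⟨0, hk⟩))]
        have hprodc : ∏ u ∈ e0.erase (a 2), y u = A0 * A1 * A3 := by
          rw [he0def, ← Finset.image_erase hainj,
            Finset.prod_image (fun x _ x' _ h => hainj h)]
          have huniv : (Finset.univ.erase (2 : Fin 4)) = {0, 1, 3} := by decide
          rw [huniv, Finset.prod_insert (by decide), Finset.prod_insert (by decide),
            Finset.prod_singleton, ya0, ya1, ya3]
          ring
        rw [hprodc, P3.2, ya2]
        exact hcen2
      · -- center t = 3
        show ∑ e ∈ H.edges.filter (fun e => a 3 ∈ e), ∏ u ∈ e.erase (a 3), y u ≤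
          lam * y (a 3) ^ 3
        have hfilt : H.edges.filter (fun e => a 3 ∈ e) = {e0, g₄ ⟨0, hl⟩} := by
          ext e
          simp only [Finset.mem_filter, Finset.mem_insert, Finset.mem_singleton]
          constructor
          · rintro ⟨he, hin⟩
            rcases hclass e he with rfl | ⟨x, rfl⟩ | ⟨x, rfl⟩ | ⟨x, rfl⟩ | ⟨x, rfl⟩
            · exact Or.inl rfl
            · exact absurd (hainj (nota1 (a 3) ⟨x, hin⟩ (hae0 3))) (by decide)
            · exact absurd (hainj (nota2 (a 3) ⟨x, hin⟩ (hae0 3))) (by decide)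
            · exact absurd (hainj (nota3 (a 3) ⟨x, hin⟩ (hae0 3))) (by decide)
            · right
              have hx0 : (x:ℕ) = 0 := (ain4 x).mp hin
              have hxx : x = ⟨0, hl⟩ := Fin.ext (by simpa using hx0)
              rw [hxx]
          · rintro (rfl | rfl)
            · exact ⟨he0E, hae0 3⟩
            · exact ⟨gE4 _, (ain4 ⟨0, hl⟩).mpr rfl⟩
        rw [hfilt, Finset.sum_pair (Ne.symm (gne4 ⟨0, hl⟩))]
        have hprodc : ∏ u ∈ e0.erase (a 3), y u = A0 * A1 * A2 := by
          rw [he0def, ← Finset.image_erase hainj,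
            Finset.prod_image (fun x _ x' _ h => hainj h)]
          have huniv : (Finset.univ.erase (3 : Fin 4)) = {0, 1, 2} := by decide
          rw [huniv, Finset.prod_insert (by decide), Finset.prod_insert (by decide),
            Finset.prod_singleton, ya0, ya1, ya2]
          ring
        rw [hprodc, P4.2, ya3]
        exact hcen3
    · obtain ⟨e, he, hvee⟩ := Finset.mem_biUnion.mp hv
      simp only [id] at hvee
      rcases hclass e he with rfl | ⟨x, rfl⟩ | ⟨x, rfl⟩ | ⟨x, rfl⟩ | ⟨x, rfl⟩
      · exact absurd hvee hve0
      · exact (P1.1 v ⟨x, hvee⟩ (fun h => hve0 (h ▸ hae0 0))).2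
      · exact (P2.1 v ⟨x, hvee⟩ (fun h => hve0 (h ▸ hae0 1))).2
      · exact (P3.1 v ⟨x, hvee⟩ (fun h => hve0 (h ▸ hae0 2))).2
      · exact (P4.1 v ⟨x, hvee⟩ (fun h => hve0 (h ▸ hae0 3))).2

end DaggerProof
end S4
section S5
namespace DaggerProof
open Finset

lemma L_le : (1.434632:ℝ) ≤ (2 + Real.sqrt 5) ^ ((1:ℝ)/4) := by
  have h5 : (2.2360679:ℝ) ≤ Real.sqrt 5 := by
    rw [Real.le_sqrt (by norm_num) (by norm_num)]
    norm_num
  have h24 : (1.434632:ℝ)^(4:ℕ) ≤ 2 + Real.sqrt 5 := by nlinarith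
  calc (1.434632:ℝ) = ((1.434632:ℝ)^(4:ℕ))^((1:ℝ)/4) := by
        rw [← Real.rpow_natCast (1.434632:ℝ) 4, ← Real.rpow_mul (by norm_num)]
        norm_num
    _ ≤ (2 + Real.sqrt 5)^((1:ℝ)/4) :=
        Real.rpow_le_rpow (by positivity) h24 (by norm_num)

lemma key {lam : ℝ} (hlam : (1.434632:ℝ) ≤ lam) {u r : ℝ}
    (hu : u ≤ 1.434632 * r) (hr : 0 ≤ r) : u ≤ lam * r :=
  hu.trans (mul_le_mul_of_nonneg_right hlam hr)

lemma keymul {lam B c1 c2 : ℝ} (hlam : (1.434632:ℝ) ≤ lam) (hB : 0 ≤ B)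
    (h : c1 ≤ 1.434632 * c2) (hc2 : 0 ≤ c2) : B * c1 ≤ lam * (B * c2) :=
  calc B * c1 ≤ B * (1.434632 * c2) := mul_le_mul_of_nonneg_left h hB
    _ = 1.434632 * (B * c2) := by ring
    _ ≤ lam * (B * c2) := mul_le_mul_of_nonneg_right hlam (mul_nonneg hB hc2)

lemma geo1 {lam : ℝ} (hlam : (1.434632:ℝ) ≤ lam) (Ag : ℝ) (hAg : 0 ≤ Ag) (s : ℕ) :
    (Ag * 0.889 ^ s) * (Ag * 0.889 ^ (s+1)) * (Ag * 0.889 ^ s * 0.7872) ≤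
      lam * (Ag * 0.889 ^ s * 0.7872) ^ 3 := by
  have hB : (0:ℝ) ≤ (Ag * 0.889 ^ s) ^ 3 := by positivity
  calc (Ag * 0.889 ^ s) * (Ag * 0.889 ^ (s+1)) * (Ag * 0.889 ^ s * 0.7872)
      = (Ag * 0.889 ^ s) ^ 3 * (0.889 * 0.7872) := by rw [pow_succ]; ring
    _ ≤ lam * ((Ag * 0.889 ^ s) ^ 3 * 0.7872 ^ 3) := keymul hlam hB (by norm_num) (by norm_num)
    _ = lam * (Ag * 0.889 ^ s * 0.7872) ^ 3 := by ring

lemma geo2 {lam : ℝ} (hlam : (1.434632:ℝ) ≤ lam) (Ag : ℝ) (hAg : 0 ≤ Ag) (n : ℕ) :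
    (Ag * 0.889 ^ n) * (Ag * 0.889 ^ n * 0.7872) ^ 2 ≤
      lam * (Ag * 0.889 ^ n * 0.7872) ^ 3 := by
  have hB : (0:ℝ) ≤ (Ag * 0.889 ^ n) ^ 3 := by positivity
  calc (Ag * 0.889 ^ n) * (Ag * 0.889 ^ n * 0.7872) ^ 2
      = (Ag * 0.889 ^ n) ^ 3 * 0.7872 ^ 2 := by ring
    _ ≤ lam * ((Ag * 0.889 ^ n) ^ 3 * 0.7872 ^ 3) := keymul hlam hB (by norm_num) (by norm_num)
    _ = lam * (Ag * 0.889 ^ n * 0.7872) ^ 3 := by ring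

lemma geo3 {lam : ℝ} (hlam : (1.434632:ℝ) ≤ lam) (Ag : ℝ) (hAg : 0 ≤ Ag) (s : ℕ) :
    (Ag * 0.889 ^ s) * (Ag * 0.889 ^ s * 0.7872) ^ 2 +
      (Ag * 0.889 ^ (s+2)) * (Ag * 0.889 ^ (s+1) * 0.7872) ^ 2 ≤
      lam * (Ag * 0.889 ^ (s+1)) ^ 3 := by
  have hB : (0:ℝ) ≤ (Ag * 0.889 ^ s) ^ 3 := by positivity
  calc (Ag * 0.889 ^ s) * (Ag * 0.889 ^ s * 0.7872) ^ 2 +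
        (Ag * 0.889 ^ (s+2)) * (Ag * 0.889 ^ (s+1) * 0.7872) ^ 2
      = (Ag * 0.889 ^ s) ^ 3 * (0.7872 ^ 2 + 0.889 ^ 4 * 0.7872 ^ 2) := by
        rw [pow_succ, pow_succ]; ring
    _ ≤ lam * ((Ag * 0.889 ^ s) ^ 3 * 0.889 ^ 3) := keymul hlam hB (by norm_num) (by norm_num)
    _ = lam * (Ag * 0.889 ^ (s+1)) ^ 3 := by rw [pow_succ]; ring

lemma geo4 {lam : ℝ} (hlam : (1.434632:ℝ) ≤ lam) (Ag : ℝ) (hAg : 0 ≤ Ag) (s : ℕ) :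
    (Ag * 0.889 ^ s) * (Ag * 0.889 ^ s * 0.7872) ^ 2 +
      (Ag * 0.889 ^ (s+1) * 0.7872) ^ 3 ≤ lam * (Ag * 0.889 ^ (s+1)) ^ 3 := by
  have hB : (0:ℝ) ≤ (Ag * 0.889 ^ s) ^ 3 := by positivity
  calc (Ag * 0.889 ^ s) * (Ag * 0.889 ^ s * 0.7872) ^ 2 + (Ag * 0.889 ^ (s+1) * 0.7872) ^ 3
      = (Ag * 0.889 ^ s) ^ 3 * (0.7872 ^ 2 + 0.889 ^ 3 * 0.7872 ^ 3) := by rw [pow_succ]; ring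
    _ ≤ lam * ((Ag * 0.889 ^ s) ^ 3 * 0.889 ^ 3) := keymul hlam hB (by norm_num) (by norm_num)
    _ = lam * (Ag * 0.889 ^ (s+1)) ^ 3 := by rw [pow_succ]; ring

set_option maxHeartbeats 2000000 in
lemma case_c1222 {V : Type} [DecidableEq V] (H : FinsetHypergraph V)
    (hd : H.IsDagger4 1 2 2 2) :
    H.spectralRadius 4 ≤ 6 * (2 + Real.sqrt 5) ^ ((1 : ℝ) / 4) := by
  refine master H (by norm_num) (by norm_num) (by norm_num) (by norm_num) hd
    ((2 + Real.sqrt 5) ^ ((1:ℝ)/4)) (by positivity)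
    0.977357 1.00221 1.00221 1.00221 (by norm_num) (by norm_num) (by norm_num) (by norm_num)
    (fun s : ℕ => if s = 0 then (0.977357:ℝ) else 1)
    (fun s : ℕ => if s = 0 then (0.68127305:ℝ) else 1)
    (fun s : ℕ => if s = 0 then (1.00221:ℝ) else if s = 1 then (0.79934466:ℝ) else 1)
    (fun s : ℕ => if s = 0 then (0.74727484:ℝ) else if s = 1 then (0.55718837:ℝ) else 1)
    (fun s : ℕ => if s = 0 then (1.00221:ℝ) else if s = 1 then (0.79934466:ℝ) else 1)
    (fun s : ℕ => if s = 0 then (0.74727484:ℝ) else if s = 1 then (0.55718837:ℝ) else 1)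
    (fun s : ℕ => if s = 0 then (1.00221:ℝ) else if s = 1 then (0.79934466:ℝ) else 1)
    (fun s : ℕ => if s = 0 then (0.74727484:ℝ) else if s = 1 then (0.55718837:ℝ) else 1)
    ?_ ?_ ?_ ?_ ?_ ?_ ?_ ?_
    ?_ ?_ ?_ ?_
    ?_ ?_ ?_ ?_ ?_ ?_ ?_ ?_ ?_ ?_ ?_ ?_ ?_ ?_ ?_ ?_
    ?_ ?_ ?_ ?_
  · intro s
    split_ifs <;> norm_num
  · intro s
    split_ifs <;> norm_num
  · intro s
    split_ifs <;> norm_num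
  · intro s
    split_ifs <;> norm_num
  · intro s
    split_ifs <;> norm_num
  · intro s
    split_ifs <;> norm_num
  · intro s
    split_ifs <;> norm_num
  · intro s
    split_ifs <;> norm_num
  · norm_num
  · norm_num
  · norm_num
  · norm_num
  · intro s hs
    exact absurd hs (by omega)
  · exact key L_le (by norm_num) (by norm_num)
  · intro s hs
    exact absurd hs (by omega)
  · intro s hs
    exact absurd hs (by omega)
  · intro s hs
    have hs0 : s = 0 := by omega
    subst hs0
    exact key L_le (by norm_num) (by norm_num)
  · exact key L_le (by norm_num) (by norm_num)
  · intro s hs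
    exact absurd hs (by omega)
  · intro s hs
    have hs0 : s = 0 := by omega
    subst hs0
    exact key L_le (by norm_num) (by norm_num)
  · intro s hs
    have hs0 : s = 0 := by omega
    subst hs0
    exact key L_le (by norm_num) (by norm_num)
  · exact key L_le (by norm_num) (by norm_num)
  · intro s hs
    exact absurd hs (by omega)
  · intro s hs
    have hs0 : s = 0 := by omega
    subst hs0
    exact key L_le (by norm_num) (by norm_num)
  · intro s hs
    have hs0 : s = 0 := by omega
    subst hs0
    exact key L_le (by norm_num) (by norm_num)
  · exact key L_le (by norm_num) (by norm_num)
  · intro s hs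
    exact absurd hs (by omega)
  · intro s hs
    have hs0 : s = 0 := by omega
    subst hs0
    exact key L_le (by norm_num) (by norm_num)
  · exact key L_le (by norm_num) (by norm_num)
  · exact key L_le (by norm_num) (by norm_num)
  · exact key L_le (by norm_num) (by norm_num)
  · exact key L_le (by norm_num) (by norm_num)

set_option maxHeartbeats 2000000 in
lemma case_c1223 {V : Type} [DecidableEq V] (H : FinsetHypergraph V)
    (hd : H.IsDagger4 1 2 2 3) :
    H.spectralRadius 4 ≤ 6 * (2 + Real.sqrt 5) ^ ((1 : ℝ) / 4) := by
  refine master H (by norm_num) (by norm_num) (by norm_num) (by norm_num) hd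
    ((2 + Real.sqrt 5) ^ ((1:ℝ)/4)) (by positivity)
    0.977357 1.00221 1.00221 1.0144054 (by norm_num) (by norm_num) (by norm_num) (by norm_num)
    (fun s : ℕ => if s = 0 then (0.977357:ℝ) else 1)
    (fun s : ℕ => if s = 0 then (0.68127305:ℝ) else 1)
    (fun s : ℕ => if s = 0 then (1.00221:ℝ) else if s = 1 then (0.79934466:ℝ) else 1)
    (fun s : ℕ => if s = 0 then (0.74727484:ℝ) else if s = 1 then (0.55718837:ℝ) else 1)
    (fun s : ℕ => if s = 0 then (1.00221:ℝ) else if s = 1 then (0.79934466:ℝ) else 1)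
    (fun s : ℕ => if s = 0 then (0.74727484:ℝ) else if s = 1 then (0.55718837:ℝ) else 1)
    (fun s : ℕ => if s = 0 then (1.0144054:ℝ) else if s = 1 then (0.85070806:ℝ) else if s = 2 then (0.6785095:ℝ) else 1)
    (fun s : ℕ => if s = 0 then (0.77558617:ℝ) else if s = 1 then (0.63431094:ℝ) else if s = 2 then (0.47295942:ℝ) else 1)
    ?_ ?_ ?_ ?_ ?_ ?_ ?_ ?_
    ?_ ?_ ?_ ?_
    ?_ ?_ ?_ ?_ ?_ ?_ ?_ ?_ ?_ ?_ ?_ ?_ ?_ ?_ ?_ ?_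
    ?_ ?_ ?_ ?_
  · intro s
    split_ifs <;> norm_num
  · intro s
    split_ifs <;> norm_num
  · intro s
    split_ifs <;> norm_num
  · intro s
    split_ifs <;> norm_num
  · intro s
    split_ifs <;> norm_num
  · intro s
    split_ifs <;> norm_num
  · intro s
    split_ifs <;> norm_num
  · intro s
    split_ifs <;> norm_num
  · norm_num
  · norm_num
  · norm_num
  · norm_num
  · intro s hs
    exact absurd hs (by omega)
  · exact key L_le (by norm_num) (by norm_num)
  · intro s hs
    exact absurd hs (by omega)
  · intro s hs
    exact absurd hs (by omega)
  · intro s hs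
    have hs0 : s = 0 := by omega
    subst hs0
    exact key L_le (by norm_num) (by norm_num)
  · exact key L_le (by norm_num) (by norm_num)
  · intro s hs
    exact absurd hs (by omega)
  · intro s hs
    have hs0 : s = 0 := by omega
    subst hs0
    exact key L_le (by norm_num) (by norm_num)
  · intro s hs
    have hs0 : s = 0 := by omega
    subst hs0
    exact key L_le (by norm_num) (by norm_num)
  · exact key L_le (by norm_num) (by norm_num)
  · intro s hs
    exact absurd hs (by omega)
  · intro s hs
    have hs0 : s = 0 := by omega
    subst hs0
    exact key L_le (by norm_num) (by norm_num)
  · intro s hs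
    have hsv : s = 0 ∨ s = 1 := by omega
    rcases hsv with rfl | rfl <;> exact key L_le (by norm_num) (by norm_num)
  · exact key L_le (by norm_num) (by norm_num)
  · intro s hs
    have hs0 : s = 0 := by omega
    subst hs0
    exact key L_le (by norm_num) (by norm_num)
  · intro s hs
    have hs0 : s = 1 := by omega
    subst hs0
    exact key L_le (by norm_num) (by norm_num)
  · exact key L_le (by norm_num) (by norm_num)
  · exact key L_le (by norm_num) (by norm_num)
  · exact key L_le (by norm_num) (by norm_num)
  · exact key L_le (by norm_num) (by norm_num)

set_option maxHeartbeats 2000000 in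
lemma case_c1144 {V : Type} [DecidableEq V] (H : FinsetHypergraph V)
    (hd : H.IsDagger4 1 1 4 4) :
    H.spectralRadius 4 ≤ 6 * (2 + Real.sqrt 5) ^ ((1 : ℝ) / 4) := by
  refine master H (by norm_num) (by norm_num) (by norm_num) (by norm_num) hd
    ((2 + Real.sqrt 5) ^ ((1:ℝ)/4)) (by positivity)
    0.977357 0.977357 1.0210358 1.0210358 (by norm_num) (by norm_num) (by norm_num) (by norm_num)
    (fun s : ℕ => if s = 0 then (0.977357:ℝ) else 1)
    (fun s : ℕ => if s = 0 then (0.68127305:ℝ) else 1)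
    (fun s : ℕ => if s = 0 then (0.977357:ℝ) else 1)
    (fun s : ℕ => if s = 0 then (0.68127305:ℝ) else 1)
    (fun s : ℕ => if s = 0 then (1.0210358:ℝ) else if s = 1 then (0.8772274:ℝ) else if s = 2 then (0.73566691:ℝ) else if s = 3 then (0.58675466:ℝ) else 1)
    (fun s : ℕ => if s = 0 then (0.79015183:ℝ) else if s = 1 then (0.67070371:ℝ) else if s = 2 then (0.5485331:ℝ) else if s = 3 then (0.40900111:ℝ) else 1)
    (fun s : ℕ => if s = 0 then (1.0210358:ℝ) else if s = 1 then (0.8772274:ℝ) else if s = 2 then (0.73566691:ℝ) else if s = 3 then (0.58675466:ℝ) else 1)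
    (fun s : ℕ => if s = 0 then (0.79015183:ℝ) else if s = 1 then (0.67070371:ℝ) else if s = 2 then (0.5485331:ℝ) else if s = 3 then (0.40900111:ℝ) else 1)
    ?_ ?_ ?_ ?_ ?_ ?_ ?_ ?_
    ?_ ?_ ?_ ?_
    ?_ ?_ ?_ ?_ ?_ ?_ ?_ ?_ ?_ ?_ ?_ ?_ ?_ ?_ ?_ ?_
    ?_ ?_ ?_ ?_
  · intro s
    split_ifs <;> norm_num
  · intro s
    split_ifs <;> norm_num
  · intro s
    split_ifs <;> norm_num
  · intro s
    split_ifs <;> norm_num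
  · intro s
    split_ifs <;> norm_num
  · intro s
    split_ifs <;> norm_num
  · intro s
    split_ifs <;> norm_num
  · intro s
    split_ifs <;> norm_num
  · norm_num
  · norm_num
  · norm_num
  · norm_num
  · intro s hs
    exact absurd hs (by omega)
  · exact key L_le (by norm_num) (by norm_num)
  · intro s hs
    exact absurd hs (by omega)
  · intro s hs
    exact absurd hs (by omega)
  · intro s hs
    exact absurd hs (by omega)
  · exact key L_le (by norm_num) (by norm_num)
  · intro s hs
    exact absurd hs (by omega)
  · intro s hs
    exact absurd hs (by omega)
  · intro s hs
    have hsv : s = 0 ∨ s = 1 ∨ s = 2 := by omega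
    rcases hsv with rfl | rfl | rfl <;> exact key L_le (by norm_num) (by norm_num)
  · exact key L_le (by norm_num) (by norm_num)
  · intro s hs
    have hsv : s = 0 ∨ s = 1 := by omega
    rcases hsv with rfl | rfl <;> exact key L_le (by norm_num) (by norm_num)
  · intro s hs
    have hs0 : s = 2 := by omega
    subst hs0
    exact key L_le (by norm_num) (by norm_num)
  · intro s hs
    have hsv : s = 0 ∨ s = 1 ∨ s = 2 := by omega
    rcases hsv with rfl | rfl | rfl <;> exact key L_le (by norm_num) (by norm_num)
  · exact key L_le (by norm_num) (by norm_num)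
  · intro s hs
    have hsv : s = 0 ∨ s = 1 := by omega
    rcases hsv with rfl | rfl <;> exact key L_le (by norm_num) (by norm_num)
  · intro s hs
    have hs0 : s = 2 := by omega
    subst hs0
    exact key L_le (by norm_num) (by norm_num)
  · exact key L_le (by norm_num) (by norm_num)
  · exact key L_le (by norm_num) (by norm_num)
  · exact key L_le (by norm_num) (by norm_num)
  · exact key L_le (by norm_num) (by norm_num)

set_option maxHeartbeats 2000000 in
lemma case_c1145 {V : Type} [DecidableEq V] (H : FinsetHypergraph V)
    (hd : H.IsDagger4 1 1 4 5) :
    H.spectralRadius 4 ≤ 6 * (2 + Real.sqrt 5) ^ ((1 : ℝ) / 4) := by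
  refine master H (by norm_num) (by norm_num) (by norm_num) (by norm_num) hd
    ((2 + Real.sqrt 5) ^ ((1:ℝ)/4)) (by positivity)
    0.977357 0.977357 1.0210358 1.0248384 (by norm_num) (by norm_num) (by norm_num) (by norm_num)
    (fun s : ℕ => if s = 0 then (0.977357:ℝ) else 1)
    (fun s : ℕ => if s = 0 then (0.68127305:ℝ) else 1)
    (fun s : ℕ => if s = 0 then (0.977357:ℝ) else 1)
    (fun s : ℕ => if s = 0 then (0.68127305:ℝ) else 1)
    (fun s : ℕ => if s = 0 then (1.0210358:ℝ) else if s = 1 then (0.8772274:ℝ) else if s = 2 then (0.73566691:ℝ) else if s = 3 then (0.58675466:ℝ) else 1)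
    (fun s : ℕ => if s = 0 then (0.79015183:ℝ) else if s = 1 then (0.67070371:ℝ) else if s = 2 then (0.5485331:ℝ) else if s = 3 then (0.40900111:ℝ) else 1)
    (fun s : ℕ => if s = 0 then (1.0248384:ℝ) else if s = 1 then (0.8920383:ℝ) else if s = 2 then (0.76639865:ℝ) else if s = 3 then (0.64272289:ℝ) else if s = 4 then (0.51262417:ℝ) else 1)
    (fun s : ℕ => if s = 0 then (0.79827666:ℝ) else if s = 1 then (0.69032418:ℝ) else if s = 2 then (0.58596714:ℝ) else if s = 3 then (0.47923155:ℝ) else if s = 4 then (0.35732805:ℝ) else 1)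
    ?_ ?_ ?_ ?_ ?_ ?_ ?_ ?_
    ?_ ?_ ?_ ?_
    ?_ ?_ ?_ ?_ ?_ ?_ ?_ ?_ ?_ ?_ ?_ ?_ ?_ ?_ ?_ ?_
    ?_ ?_ ?_ ?_
  · intro s
    split_ifs <;> norm_num
  · intro s
    split_ifs <;> norm_num
  · intro s
    split_ifs <;> norm_num
  · intro s
    split_ifs <;> norm_num
  · intro s
    split_ifs <;> norm_num
  · intro s
    split_ifs <;> norm_num
  · intro s
    split_ifs <;> norm_num
  · intro s
    split_ifs <;> norm_num
  · norm_num
  · norm_num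
  · norm_num
  · norm_num
  · intro s hs
    exact absurd hs (by omega)
  · exact key L_le (by norm_num) (by norm_num)
  · intro s hs
    exact absurd hs (by omega)
  · intro s hs
    exact absurd hs (by omega)
  · intro s hs
    exact absurd hs (by omega)
  · exact key L_le (by norm_num) (by norm_num)
  · intro s hs
    exact absurd hs (by omega)
  · intro s hs
    exact absurd hs (by omega)
  · intro s hs
    have hsv : s = 0 ∨ s = 1 ∨ s = 2 := by omega
    rcases hsv with rfl | rfl | rfl <;> exact key L_le (by norm_num) (by norm_num)
  · exact key L_le (by norm_num) (by norm_num)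
  · intro s hs
    have hsv : s = 0 ∨ s = 1 := by omega
    rcases hsv with rfl | rfl <;> exact key L_le (by norm_num) (by norm_num)
  · intro s hs
    have hs0 : s = 2 := by omega
    subst hs0
    exact key L_le (by norm_num) (by norm_num)
  · intro s hs
    have hsv : s = 0 ∨ s = 1 ∨ s = 2 ∨ s = 3 := by omega
    rcases hsv with rfl | rfl | rfl | rfl <;> exact key L_le (by norm_num) (by norm_num)
  · exact key L_le (by norm_num) (by norm_num)
  · intro s hs
    have hsv : s = 0 ∨ s = 1 ∨ s = 2 := by omega
    rcases hsv with rfl | rfl | rfl <;> exact key L_le (by norm_num) (by norm_num)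
  · intro s hs
    have hs0 : s = 3 := by omega
    subst hs0
    exact key L_le (by norm_num) (by norm_num)
  · exact key L_le (by norm_num) (by norm_num)
  · exact key L_le (by norm_num) (by norm_num)
  · exact key L_le (by norm_num) (by norm_num)
  · exact key L_le (by norm_num) (by norm_num)

set_option maxHeartbeats 2000000 in
lemma case_c11_1 {V : Type} [DecidableEq V] (H : FinsetHypergraph V) (l : ℕ) (hl : 1 ≤ l)
    (hd : H.IsDagger4 1 1 1 l) :
    H.spectralRadius 4 ≤ 6 * (2 + Real.sqrt 5) ^ ((1 : ℝ) / 4) := by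
  refine master H (by norm_num) (by norm_num) (by norm_num) (by omega) hd
    ((2 + Real.sqrt 5) ^ ((1:ℝ)/4)) (by positivity)
    0.977357 0.977357 0.977357 1.0313824 (by norm_num) (by norm_num) (by norm_num) (by norm_num)
    (fun s : ℕ => if s = 0 then (0.977357:ℝ) else 1)
    (fun s : ℕ => if s = 0 then (0.68127305:ℝ) else 1)
    (fun s : ℕ => if s = 0 then (0.977357:ℝ) else 1)
    (fun s : ℕ => if s = 0 then (0.68127305:ℝ) else 1)
    (fun s : ℕ => if s = 0 then (0.977357:ℝ) else 1)
    (fun s : ℕ => if s = 0 then (0.68127305:ℝ) else 1)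
    (fun s : ℕ => (1.0313824:ℝ) * 0.889 ^ s)
    (fun s : ℕ => (1.0313824:ℝ) * 0.889 ^ s * 0.7872)
    ?_ ?_ ?_ ?_ ?_ ?_ ?_ ?_
    ?_ ?_ ?_ ?_
    ?_ ?_ ?_ ?_ ?_ ?_ ?_ ?_ ?_ ?_ ?_ ?_ ?_ ?_ ?_ ?_
    ?_ ?_ ?_ ?_
  · intro s
    split_ifs <;> norm_num
  · intro s
    split_ifs <;> norm_num
  · intro s
    split_ifs <;> norm_num
  · intro s
    split_ifs <;> norm_num
  · intro s
    split_ifs <;> norm_num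
  · intro s
    split_ifs <;> norm_num
  · intro s
    positivity
  · intro s
    positivity
  · norm_num
  · norm_num
  · norm_num
  · norm_num
  · intro s hs
    exact absurd hs (by omega)
  · exact key L_le (by norm_num) (by norm_num)
  · intro s hs
    exact absurd hs (by omega)
  · intro s hs
    exact absurd hs (by omega)
  · intro s hs
    exact absurd hs (by omega)
  · exact key L_le (by norm_num) (by norm_num)
  · intro s hs
    exact absurd hs (by omega)
  · intro s hs
    exact absurd hs (by omega)
  · intro s hs
    exact absurd hs (by omega)
  · exact key L_le (by norm_num) (by norm_num)
  · intro s hs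
    exact absurd hs (by omega)
  · intro s hs
    exact absurd hs (by omega)
  · intro s hs
    exact geo1 L_le _ (by norm_num) s
  · exact geo2 L_le _ (by norm_num) _
  · intro s hs
    exact geo3 L_le _ (by norm_num) s
  · intro s hs
    exact geo4 L_le _ (by norm_num) s
  · exact key L_le (by norm_num) (by norm_num)
  · exact key L_le (by norm_num) (by norm_num)
  · exact key L_le (by norm_num) (by norm_num)
  · split_ifs <;> exact key L_le (by norm_num) (by norm_num)

set_option maxHeartbeats 2000000 in
lemma case_c11_2 {V : Type} [DecidableEq V] (H : FinsetHypergraph V) (l : ℕ) (hl : 2 ≤ l)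
    (hd : H.IsDagger4 1 1 2 l) :
    H.spectralRadius 4 ≤ 6 * (2 + Real.sqrt 5) ^ ((1 : ℝ) / 4) := by
  refine master H (by norm_num) (by norm_num) (by norm_num) (by omega) hd
    ((2 + Real.sqrt 5) ^ ((1:ℝ)/4)) (by positivity)
    0.977357 0.977357 1.00221 1.0313824 (by norm_num) (by norm_num) (by norm_num) (by norm_num)
    (fun s : ℕ => if s = 0 then (0.977357:ℝ) else 1)
    (fun s : ℕ => if s = 0 then (0.68127305:ℝ) else 1)
    (fun s : ℕ => if s = 0 then (0.977357:ℝ) else 1)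
    (fun s : ℕ => if s = 0 then (0.68127305:ℝ) else 1)
    (fun s : ℕ => if s = 0 then (1.00221:ℝ) else if s = 1 then (0.79934466:ℝ) else 1)
    (fun s : ℕ => if s = 0 then (0.74727484:ℝ) else if s = 1 then (0.55718837:ℝ) else 1)
    (fun s : ℕ => (1.0313824:ℝ) * 0.889 ^ s)
    (fun s : ℕ => (1.0313824:ℝ) * 0.889 ^ s * 0.7872)
    ?_ ?_ ?_ ?_ ?_ ?_ ?_ ?_
    ?_ ?_ ?_ ?_
    ?_ ?_ ?_ ?_ ?_ ?_ ?_ ?_ ?_ ?_ ?_ ?_ ?_ ?_ ?_ ?_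
    ?_ ?_ ?_ ?_
  · intro s
    split_ifs <;> norm_num
  · intro s
    split_ifs <;> norm_num
  · intro s
    split_ifs <;> norm_num
  · intro s
    split_ifs <;> norm_num
  · intro s
    split_ifs <;> norm_num
  · intro s
    split_ifs <;> norm_num
  · intro s
    positivity
  · intro s
    positivity
  · norm_num
  · norm_num
  · norm_num
  · norm_num
  · intro s hs
    exact absurd hs (by omega)
  · exact key L_le (by norm_num) (by norm_num)
  · intro s hs
    exact absurd hs (by omega)
  · intro s hs
    exact absurd hs (by omega)
  · intro s hs
    exact absurd hs (by omega)
  · exact key L_le (by norm_num) (by norm_num)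
  · intro s hs
    exact absurd hs (by omega)
  · intro s hs
    exact absurd hs (by omega)
  · intro s hs
    have hs0 : s = 0 := by omega
    subst hs0
    exact key L_le (by norm_num) (by norm_num)
  · exact key L_le (by norm_num) (by norm_num)
  · intro s hs
    exact absurd hs (by omega)
  · intro s hs
    have hs0 : s = 0 := by omega
    subst hs0
    exact key L_le (by norm_num) (by norm_num)
  · intro s hs
    exact geo1 L_le _ (by norm_num) s
  · exact geo2 L_le _ (by norm_num) _
  · intro s hs
    exact geo3 L_le _ (by norm_num) s
  · intro s hs
    exact geo4 L_le _ (by norm_num) s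
  · exact key L_le (by norm_num) (by norm_num)
  · exact key L_le (by norm_num) (by norm_num)
  · exact key L_le (by norm_num) (by norm_num)
  · split_ifs <;> exact key L_le (by norm_num) (by norm_num)

set_option maxHeartbeats 2000000 in
lemma case_c11_3 {V : Type} [DecidableEq V] (H : FinsetHypergraph V) (l : ℕ) (hl : 3 ≤ l)
    (hd : H.IsDagger4 1 1 3 l) :
    H.spectralRadius 4 ≤ 6 * (2 + Real.sqrt 5) ^ ((1 : ℝ) / 4) := by
  refine master H (by norm_num) (by norm_num) (by norm_num) (by omega) hd
    ((2 + Real.sqrt 5) ^ ((1:ℝ)/4)) (by positivity)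
    0.977357 0.977357 1.0144054 1.0313824 (by norm_num) (by norm_num) (by norm_num) (by norm_num)
    (fun s : ℕ => if s = 0 then (0.977357:ℝ) else 1)
    (fun s : ℕ => if s = 0 then (0.68127305:ℝ) else 1)
    (fun s : ℕ => if s = 0 then (0.977357:ℝ) else 1)
    (fun s : ℕ => if s = 0 then (0.68127305:ℝ) else 1)
    (fun s : ℕ => if s = 0 then (1.0144054:ℝ) else if s = 1 then (0.85070806:ℝ) else if s = 2 then (0.6785095:ℝ) else 1)
    (fun s : ℕ => if s = 0 then (0.77558617:ℝ) else if s = 1 then (0.63431094:ℝ) else if s = 2 then (0.47295942:ℝ) else 1)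
    (fun s : ℕ => (1.0313824:ℝ) * 0.889 ^ s)
    (fun s : ℕ => (1.0313824:ℝ) * 0.889 ^ s * 0.7872)
    ?_ ?_ ?_ ?_ ?_ ?_ ?_ ?_
    ?_ ?_ ?_ ?_
    ?_ ?_ ?_ ?_ ?_ ?_ ?_ ?_ ?_ ?_ ?_ ?_ ?_ ?_ ?_ ?_
    ?_ ?_ ?_ ?_
  · intro s
    split_ifs <;> norm_num
  · intro s
    split_ifs <;> norm_num
  · intro s
    split_ifs <;> norm_num
  · intro s
    split_ifs <;> norm_num
  · intro s
    split_ifs <;> norm_num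
  · intro s
    split_ifs <;> norm_num
  · intro s
    positivity
  · intro s
    positivity
  · norm_num
  · norm_num
  · norm_num
  · norm_num
  · intro s hs
    exact absurd hs (by omega)
  · exact key L_le (by norm_num) (by norm_num)
  · intro s hs
    exact absurd hs (by omega)
  · intro s hs
    exact absurd hs (by omega)
  · intro s hs
    exact absurd hs (by omega)
  · exact key L_le (by norm_num) (by norm_num)
  · intro s hs
    exact absurd hs (by omega)
  · intro s hs
    exact absurd hs (by omega)
  · intro s hs
    have hsv : s = 0 ∨ s = 1 := by omega
    rcases hsv with rfl | rfl <;> exact key L_le (by norm_num) (by norm_num)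
  · exact key L_le (by norm_num) (by norm_num)
  · intro s hs
    have hs0 : s = 0 := by omega
    subst hs0
    exact key L_le (by norm_num) (by norm_num)
  · intro s hs
    have hs0 : s = 1 := by omega
    subst hs0
    exact key L_le (by norm_num) (by norm_num)
  · intro s hs
    exact geo1 L_le _ (by norm_num) s
  · exact geo2 L_le _ (by norm_num) _
  · intro s hs
    exact geo3 L_le _ (by norm_num) s
  · intro s hs
    exact geo4 L_le _ (by norm_num) s
  · exact key L_le (by norm_num) (by norm_num)
  · exact key L_le (by norm_num) (by norm_num)
  · exact key L_le (by norm_num) (by norm_num)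
  · split_ifs <;> exact key L_le (by norm_num) (by norm_num)

end DaggerProof
end S5

open DaggerProof in
/-- The 4-daggers `H^{(4)}_{1,2,2,2}`, `H^{(4)}_{1,2,2,3}`, `H^{(4)}_{1,1,4,4}`,
`H^{(4)}_{1,1,4,5}` and `H^{(4)}_{1,1,k,l}` (`1 ≤ k ≤ 3 ≤ l`, `k ≤ l`) all have spectral
radius at most `6·(2+√5)^{1/4}`. -/
theorem dagger_spectralRadius_le {V : Type} [DecidableEq V] (H : FinsetHypergraph V)
    (i j k l : ℕ) (hd : H.IsDagger4 i j k l)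
    (hc : (i, j, k, l) = (1, 2, 2, 2) ∨ (i, j, k, l) = (1, 2, 2, 3) ∨
      (i, j, k, l) = (1, 1, 4, 4) ∨ (i, j, k, l) = (1, 1, 4, 5) ∨
      (i = 1 ∧ j = 1 ∧ 1 ≤ k ∧ k ≤ 3 ∧ k ≤ l)) :
    H.spectralRadius 4 ≤ 6 * (2 + Real.sqrt 5) ^ ((1 : ℝ) / 4) := by
  rcases hc with h | h | h | h | ⟨hi1, hj1, hk1, hk3, hkl⟩ <;>
    try (simp only [Prod.mk.injEq] at h; obtain ⟨rfl, rfl, rfl, rfl⟩ := h)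
  · exact case_c1222 H hd
  · exact case_c1223 H hd
  · exact case_c1144 H hd
  · exact case_c1145 H hd
  · subst hi1; subst hj1
    interval_cases k
    · exact case_c11_1 H l hkl hd
    · exact case_c11_2 H l hkl hd
    · exact case_c11_3 H l hkl hd
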